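/- arXiv:2005.05833 — 11 statements merged into one kernel-verified Lean document; each statement's English description precedes it below -/
import Mathlib

section
/- Let k be a field of characteristic p > 0, let k[X^{1/p^∞}] be the k-subalgebra of an algebraic closure of k(X) generated by all p-power roots of X, and let A = k[X^{1/p^∞}]/(X). Then the module of Kähler differentials Ω_{A/k} is zero, but A is not reduced. -/
/-!
Every generator `X^{1/p^n}` of `A` is the `p`-th power of the next one, and a derivation kills
`p`-th powers in characteristic `p`; hence `d` vanishes on generators and `Ω_{A/k} = 0`.
On the other hand `X^{1/p}` is nilpotent in `A` but not zero: an identity `X^{1/p} = X · c`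
with `c ∈ k[X^{1/p^∞}]` takes place in some `k[X^{1/p^n}]`, a polynomial ring in the
transcendental element `X^{1/p^n}`, where `X = (X^{1/p^n})^{p^n}` does not divide
`X^{1/p} = (X^{1/p^n})^{p^{n-1}}`.
-/

section CharP

variable {k B M : Type*} [CommRing k] [CommRing B] [Algebra k B] (p : ℕ) [CharP k p]
  [AddCommGroup M] [Module B M] [Module k M]

theorem Derivation.map_pow_char_eq_zero (D : Derivation k B M) (b : B) : D (b ^ p) = 0 := by
  have hp : (p : B) = 0 := by
    rw [← _root_.map_natCast (algebraMap k B), CharP.cast_eq_zero, map_zero]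
  rw [D.leibniz_pow, ← Nat.cast_smul_eq_nsmul B, hp, zero_smul]

theorem Derivation.eq_zero_of_adjoin_range_pow_eq_top [IsScalarTower k B M]
    (h : Algebra.adjoin k (Set.range (· ^ p : B → B)) = ⊤) (D : Derivation k B M) : D = 0 := by
  have hpow : Set.EqOn D 0 (Set.range (· ^ p : B → B)) := by
    rintro _ ⟨b, rfl⟩
    exact D.map_pow_char_eq_zero p b
  ext b
  exact D.eqOn_adjoin hpow (h ▸ Algebra.mem_top : b ∈ Algebra.adjoin k _)

theorem KaehlerDifferential.subsingleton_of_adjoin_range_pow_eq_top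
    (h : Algebra.adjoin k (Set.range (· ^ p : B → B)) = ⊤) : Subsingleton Ω[B⁄k] := by
  have hD : KaehlerDifferential.D k B = 0 := Derivation.eq_zero_of_adjoin_range_pow_eq_top p h _
  refine subsingleton_of_forall_eq 0 fun ω => ?_
  have hω : ω ∈ Submodule.span B (Set.range (KaehlerDifferential.D k B)) := by
    rw [KaehlerDifferential.span_range_derivation]; trivial
  rw [hD] at hω
  simpa [Set.range_const] using hω

end CharP

theorem Algebra.adjoin_range_pow_eq_top_of_pow_succ_eq {k B : Type*} [CommRing k] [CommRing B]
    [Algebra k B] {p : ℕ} (f : ℕ → B) (hf : ∀ n, f (n + 1) ^ p = f n)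
    (htop : Algebra.adjoin k (Set.range f) = ⊤) :
    Algebra.adjoin k (Set.range (· ^ p : B → B)) = ⊤ := by
  refine top_le_iff.mp (htop ▸ Algebra.adjoin_mono ?_)
  rintro _ ⟨n, rfl⟩
  exact ⟨f (n + 1), hf n⟩

theorem Algebra.adjoin_range_quotient_mk_eq_top {k L ι : Type*} [CommRing k] [CommRing L]
    [Algebra k L] (r : ι → L) (I : Ideal (Algebra.adjoin k (Set.range r))) :
    Algebra.adjoin k (Set.range fun i =>
      Ideal.Quotient.mk I ⟨r i, Algebra.subset_adjoin (Set.mem_range_self i)⟩) = ⊤ := by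
  have hgen : Algebra.adjoin k (Set.range fun i =>
      (⟨r i, Algebra.subset_adjoin (Set.mem_range_self i)⟩ : Algebra.adjoin k (Set.range r))) =
      ⊤ := by
    convert Algebra.adjoin_adjoin_coe_preimage (R := k) (s := Set.range r)
    ext ⟨y, hy⟩
    simp [Subtype.ext_iff]
  have himage := Algebra.adjoin_image k (Ideal.Quotient.mkₐ k I) (Set.range fun i =>
      (⟨r i, Algebra.subset_adjoin (Set.mem_range_self i)⟩ : Algebra.adjoin k (Set.range r)))
  rw [← Set.range_comp, hgen, Algebra.map_top,
    (Ideal.Quotient.mkₐ k I).range_eq_top.mpr (Ideal.Quotient.mkₐ_surjective k I)] at himage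
  exact himage

theorem Transcendental.le_of_pow_eq_mul_pow {k L : Type*} [CommRing k] [Nontrivial k]
    [CommRing L] [Algebra k L] {t c : L} (ht : Transcendental k t)
    (hc : c ∈ Algebra.adjoin k {t}) {a b : ℕ} (h : t ^ a = c * t ^ b) : b ≤ a := by
  rw [Algebra.adjoin_singleton_eq_range_aeval] at hc
  obtain ⟨f, rfl⟩ := hc
  have hpoly : (Polynomial.X ^ a : Polynomial k) = f * Polynomial.X ^ b :=
    transcendental_iff_injective.mp ht (by simpa using h)
  by_contra! hab
  have hdvd : (Polynomial.X ^ b : Polynomial k) ∣ Polynomial.X ^ a :=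
    ⟨f, hpoly.trans (mul_comm _ _)⟩
  simpa using Polynomial.X_pow_dvd_iff.mp hdvd a hab

theorem not_isReduced_quotient_span_singleton {R : Type*} [CommRing R] {x y : R} {n : ℕ}
    (hy : y ^ n = x) (hxy : y ∉ Ideal.span {x}) : ¬ IsReduced (R ⧸ Ideal.span {x}) := by
  intro hred
  have hnil : IsNilpotent (Ideal.Quotient.mk (Ideal.span {x}) y) :=
    ⟨n, by rw [← map_pow, hy, Ideal.Quotient.eq_zero_iff_mem]
           exact Ideal.mem_span_singleton_self x⟩
  exact hxy (Ideal.Quotient.eq_zero_iff_mem.mp hnil.eq_zero)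

section CompatibleRoots

variable {k L : Type*} [CommRing k] [CommRing L] [Algebra k L] {p : ℕ} {r : ℕ → L}

theorem pow_pow_eq_of_pow_succ_eq (hr : ∀ n, r (n + 1) ^ p = r n) (m d : ℕ) :
    r (m + d) ^ p ^ d = r m := by
  induction d with
  | zero => simp
  | succ d ih => rw [← ih, ← hr (m + d), ← pow_mul, ← pow_succ', ← add_assoc]

theorem monotone_adjoin_singleton_of_pow_succ_eq (hr : ∀ n, r (n + 1) ^ p = r n) :
    Monotone fun n => Algebra.adjoin k {r n} := by
  intro m n hmn
  refine Algebra.adjoin_le (Set.singleton_subset_iff.mpr ?_)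
  obtain ⟨d, rfl⟩ := Nat.exists_eq_add_of_le hmn
  rw [← pow_pow_eq_of_pow_succ_eq hr m d]
  exact pow_mem (Algebra.self_mem_adjoin_singleton k _) _

theorem exists_mem_adjoin_singleton_of_pow_succ_eq (hr : ∀ n, r (n + 1) ^ p = r n) {c : L}
    (hc : c ∈ Algebra.adjoin k (Set.range r)) :
    ∃ N, ∀ n, N ≤ n → c ∈ Algebra.adjoin k {r n} := by
  have hmono := monotone_adjoin_singleton_of_pow_succ_eq (k := k) hr
  rw [← Set.iUnion_singleton_eq_range, Algebra.adjoin_iUnion, ← SetLike.mem_coe,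
    Subalgebra.coe_iSup_of_directed hmono.directed_le, Set.mem_iUnion] at hc
  obtain ⟨N, hN⟩ := hc
  exact ⟨N, fun n hn => hmono hn hN⟩

theorem root_one_notMem_span_root_zero_of_pow_succ_eq [IsDomain k] (hp : 1 < p)
    (hr : ∀ n, r (n + 1) ^ p = r n) (htr : Transcendental k (r 0)) :
    (⟨r 1, Algebra.subset_adjoin (Set.mem_range_self 1)⟩ : Algebra.adjoin k (Set.range r)) ∉
      Ideal.span {⟨r 0, Algebra.subset_adjoin (Set.mem_range_self 0)⟩} := by
  rw [Ideal.mem_span_singleton']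
  rintro ⟨c, hc⟩
  obtain ⟨N, hN⟩ := exists_mem_adjoin_singleton_of_pow_succ_eq hr c.2
  have h1 : r (1 + N) ^ p ^ N = r 1 := pow_pow_eq_of_pow_succ_eq hr 1 N
  have h0 : r (1 + N) ^ p ^ (N + 1) = r 0 := by
    simpa [add_comm] using pow_pow_eq_of_pow_succ_eq hr 0 (N + 1)
  have ht : Transcendental k (r (1 + N)) := fun halg => htr (h0 ▸ halg.pow _)
  have hle := ht.le_of_pow_eq_mul_pow (hN (1 + N) (by omega)) (a := p ^ N) (b := p ^ (N + 1))
    (by rw [h1, h0]; exact (congrArg Subtype.val hc).symm)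
  exact absurd hle (not_le.mpr (Nat.pow_lt_pow_right hp N.lt_succ_self))

end CompatibleRoots

/-- Example 2.1: the non-reduced formally unramified algebra
`A = k[X^{1/p^∞}]/(X)` in characteristic `p`.  Here `r n` is a compatible
choice of `p^n`-th roots of `X` in an algebraic closure of `k(X)`. -/
theorem stmt0 (p : ℕ) [Fact p.Prime] (k : Type) [Field k] [CharP k p]
    (r : ℕ → AlgebraicClosure (RatFunc k))
    (hr0 : r 0 = algebraMap (RatFunc k) (AlgebraicClosure (RatFunc k)) RatFunc.X)
    (hr : ∀ n, r (n + 1) ^ p = r n) :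
    Subsingleton (KaehlerDifferential k
      ((Algebra.adjoin k (Set.range r)) ⧸
        (Ideal.span {(⟨r 0, Algebra.subset_adjoin (Set.mem_range_self 0)⟩ :
          Algebra.adjoin k (Set.range r))}))) ∧
    ¬ IsReduced ((Algebra.adjoin k (Set.range r)) ⧸
        (Ideal.span {(⟨r 0, Algebra.subset_adjoin (Set.mem_range_self 0)⟩ :
          Algebra.adjoin k (Set.range r))})) := by
  set R := Algebra.adjoin k (Set.range r)
  set x : ℕ → R := fun n => ⟨r n, Algebra.subset_adjoin (Set.mem_range_self n)⟩
  have hx : ∀ n, x (n + 1) ^ p = x n := fun n => Subtype.ext (hr n)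
  have htr : Transcendental k (r 0) := by
    rw [hr0, transcendental_algebraMap_iff (algebraMap (RatFunc k) _).injective]
    exact RatFunc.transcendental_X
  refine ⟨KaehlerDifferential.subsingleton_of_adjoin_range_pow_eq_top p ?_,
    not_isReduced_quotient_span_singleton (hx 0)
      (root_one_notMem_span_root_zero_of_pow_succ_eq (Fact.out : p.Prime).one_lt hr htr)⟩
  exact Algebra.adjoin_range_pow_eq_top_of_pow_succ_eq _ (fun n => by rw [← map_pow, hx n])
    (Algebra.adjoin_range_quotient_mk_eq_top r _)
end

section
/- Let k be a field of characteristic zero, n ≥ 5, F = X²Y² + X^n + Y^n ∈ k[[X,Y]], and B = k[[X,Y]]/(∂F/∂X, ∂F/∂Y). Let f denote the image of F in B. Then f ≠ 0 but f² = 0. -/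
/-!
Write `x, y` for the images of `X, Y` in `B`. The relations `2xy² = -n xⁿ⁻¹` and `2x²y = -n yⁿ⁻¹`
give `2x²y² = -n xⁿ = -n yⁿ`, hence `n f = (n - 4) x²y²` and `4 (xy)⁴ = n² (xy)ⁿ`. As `n > 4` and
`xy` lies in the maximal ideal, the latter forces `(xy)⁴ = 0`, so `f² = 0`.

Conversely, if `F = a ∂F/∂X + b ∂F/∂Y`, the coefficients of `X²Y²`, `Xⁿ` and `Yⁿ` give
`2a₁₀ + 2b₀₁ = 1` and `n a₁₀ = n b₀₁ = 1`, so `n = 4`.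
-/

open MvPowerSeries Finsupp

section JacobianRelations

variable {A : Type*} [CommRing A] {x y p q : A} {n : ℕ}

theorem isUnit_sub_of_mem_jacobson_bot {u a : A} (hu : IsUnit u)
    (ha : a ∈ Ideal.jacobson (⊥ : Ideal A)) : IsUnit (u - a) := by
  obtain ⟨u, rfl⟩ := hu
  convert u.isUnit.mul (Ideal.mem_jacobson_bot.mp ha (-↑u⁻¹)) using 1
  linear_combination a * u.mul_inv

theorem mul_sq_mul_sq_eq_neg_mul_pow_of_jacobian (hn : 1 ≤ n)
    (hx : p * x * y ^ 2 + q * x ^ (n - 1) = 0) (hy : p * x ^ 2 * y + q * y ^ (n - 1) = 0) :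
    p * (x ^ 2 * y ^ 2) = -q * x ^ n ∧ p * (x ^ 2 * y ^ 2) = -q * y ^ n := by
  obtain ⟨m, rfl⟩ := Nat.exists_eq_add_of_le' hn
  rw [Nat.add_sub_cancel] at hx hy
  exact ⟨by linear_combination x * hx, by linear_combination y * hy⟩

theorem mul_pow_four_eq_zero_of_jacobian (hn : 5 ≤ n) (hp : IsUnit p)
    (hxy : x * y ∈ Ideal.jacobson (⊥ : Ideal A))
    (hx : p * x * y ^ 2 + q * x ^ (n - 1) = 0) (hy : p * x ^ 2 * y + q * y ^ (n - 1) = 0) :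
    (x * y) ^ 4 = 0 := by
  obtain ⟨hxn, hyn⟩ := mul_sq_mul_sq_eq_neg_mul_pow_of_jacobian (by omega) hx hy
  obtain ⟨m, rfl⟩ := Nat.exists_eq_add_of_le' hn
  have hunit : IsUnit (p ^ 2 - q ^ 2 * (x * y) ^ (m + 1)) :=
    isUnit_sub_of_mem_jacobson_bot (hp.pow 2)
      (Ideal.mul_mem_left _ _ (Ideal.pow_mem_of_mem _ hxy _ m.succ_pos))
  refine hunit.mul_left_eq_zero.mp ?_
  linear_combination p * (x ^ 2 * y ^ 2) * hyn - q * y ^ (m + 5) * hxn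

theorem sq_eq_zero_of_jacobian (hn : 5 ≤ n) (hp : IsUnit p) (hq : IsUnit q)
    (hxy : x * y ∈ Ideal.jacobson (⊥ : Ideal A))
    (hx : p * x * y ^ 2 + q * x ^ (n - 1) = 0) (hy : p * x ^ 2 * y + q * y ^ (n - 1) = 0) :
    (x ^ 2 * y ^ 2 + x ^ n + y ^ n) ^ 2 = 0 := by
  obtain ⟨hxn, hyn⟩ := mul_sq_mul_sq_eq_neg_mul_pow_of_jacobian (by omega) hx hy
  have h4 := mul_pow_four_eq_zero_of_jacobian hn hp hxy hx hy
  refine (hq.pow 2).mul_right_eq_zero.mp ?_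
  linear_combination (q * (x ^ 2 * y ^ 2 + x ^ n + y ^ n) + (q - 2 * p) * (x ^ 2 * y ^ 2))
    * (hxn + hyn) + (q - 2 * p) ^ 2 * h4

end JacobianRelations

section PowerSeries

variable {R : Type*}

theorem MvPowerSeries.coeff_natCast_mul [Semiring R] {σ : Type*} (m : σ →₀ ℕ) (k : ℕ)
    (φ : MvPowerSeries σ R) : coeff m ((k : MvPowerSeries σ R) * φ) = k * coeff m φ := by
  rw [← map_natCast (C (σ := σ)), coeff_C_mul]

theorem MvPowerSeries.coeff_mul_X_pow_mul_X_pow [Semiring R] (φ : MvPowerSeries (Fin 2) R)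
    (i j c d : ℕ) :
    coeff (single 0 i + single 1 j) (φ * (X 0 ^ c * X 1 ^ d)) =
      if c ≤ i ∧ d ≤ j then coeff (single 0 (i - c) + single 1 (j - d)) φ else 0 := by
  have hle : single 0 c + single 1 d ≤ (single 0 i + single 1 j : Fin 2 →₀ ℕ) ↔
      c ≤ i ∧ d ≤ j := by
    simp [Finsupp.le_def, Fin.forall_fin_two]
  have hsub : single 0 i + single 1 j - (single 0 c + single 1 d) =
      (single 0 (i - c) + single 1 (j - d) : Fin 2 →₀ ℕ) := by
    ext k; fin_cases k <;> simp
  rw [X_pow_eq, X_pow_eq, monomial_mul_monomial, one_mul, coeff_mul_monomial, mul_one, hsub]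
  exact if_congr hle rfl rfl

theorem MvPowerSeries.mk_mem_jacobson_bot_of_constantCoeff_eq_zero [CommRing R] {σ : Type*} {φ : MvPowerSeries σ R}
    (hφ : constantCoeff φ = 0) (I : Ideal (MvPowerSeries σ R)) :
    Ideal.Quotient.mk I φ ∈ Ideal.jacobson ⊥ := by
  refine Ideal.mem_jacobson_bot.mpr fun z ↦ ?_
  obtain ⟨z, rfl⟩ := Ideal.Quotient.mk_surjective z
  rw [← map_mul, ← map_one (Ideal.Quotient.mk I), ← map_add]
  exact IsUnit.map _ (isUnit_iff_constantCoeff.mpr (by simp [hφ]))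

theorem sq_mem_of_jacobian_mem [CommRing R] {n : ℕ} {I : Ideal (MvPowerSeries (Fin 2) R)}
    (hn : 5 ≤ n) (h2 : IsUnit (2 : R)) (hn' : IsUnit (n : R))
    (hx : 2 * X 0 * X 1 ^ 2 + (n : MvPowerSeries (Fin 2) R) * X 0 ^ (n - 1) ∈ I)
    (hy : 2 * X 0 ^ 2 * X 1 + (n : MvPowerSeries (Fin 2) R) * X 1 ^ (n - 1) ∈ I) :
    (X 0 ^ 2 * X 1 ^ 2 + X 0 ^ n + X 1 ^ n) ^ 2 ∈ I := by
  have h2' := h2.map (algebraMap R (MvPowerSeries (Fin 2) R ⧸ I))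
  have hn'' := hn'.map (algebraMap R (MvPowerSeries (Fin 2) R ⧸ I))
  rw [map_ofNat] at h2'
  rw [map_natCast] at hn''
  rw [← Ideal.Quotient.eq_zero_iff_mem] at hx hy ⊢
  simp only [map_add, map_mul, map_pow, map_ofNat, map_natCast] at hx hy ⊢
  refine sq_eq_zero_of_jacobian hn h2' hn'' ?_ hx hy
  rw [← map_mul]
  exact mk_mem_jacobson_bot_of_constantCoeff_eq_zero (by simp) I

theorem notMem_span_jacobian [CommRing R] {n : ℕ} (hn : 5 ≤ n) (h4 : (n : R) ≠ 4) :
    (X 0 ^ 2 * X 1 ^ 2 + X 0 ^ n + X 1 ^ n : MvPowerSeries (Fin 2) R) ∉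
      Ideal.span {2 * X 0 * X 1 ^ 2 + (n : MvPowerSeries (Fin 2) R) * X 0 ^ (n - 1),
        2 * X 0 ^ 2 * X 1 + (n : MvPowerSeries (Fin 2) R) * X 1 ^ (n - 1)} := by
  intro hmem
  obtain ⟨a, b, hab⟩ := Ideal.mem_span_pair.mp hmem
  -- each term in the shape `c * (g * (X 0 ^ i * X 1 ^ j))` read by `coeff_mul_X_pow_mul_X_pow`
  have hmon : ((2 : ℕ) : MvPowerSeries (Fin 2) R) * (a * (X 0 ^ 1 * X 1 ^ 2))
      + (n : MvPowerSeries (Fin 2) R) * (a * (X 0 ^ (n - 1) * X 1 ^ 0))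
      + (((2 : ℕ) : MvPowerSeries (Fin 2) R) * (b * (X 0 ^ 2 * X 1 ^ 1))
        + (n : MvPowerSeries (Fin 2) R) * (b * (X 0 ^ 0 * X 1 ^ (n - 1)))) =
      1 * (X 0 ^ 2 * X 1 ^ 2) + 1 * (X 0 ^ n * X 1 ^ 0) + 1 * (X 0 ^ 0 * X 1 ^ n) := by
    linear_combination hab
  have e22 := congrArg (coeff (single 0 2 + single 1 2)) hmon
  have en0 := congrArg (coeff (single 0 n + single 1 0)) hmon
  have e0n := congrArg (coeff (single 0 0 + single 1 n)) hmon
  simp only [map_add, coeff_natCast_mul, coeff_mul_X_pow_mul_X_pow] at e22 en0 e0n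
  simp [coeff_one, show ¬ n - 1 ≤ 2 by omega, show ¬ n ≤ 2 by omega, show ¬ n - 1 ≤ 0 by omega,
    show n - (n - 1) = 1 by omega, show n ≠ 0 by omega] at e22 en0 e0n
  exact h4 (by linear_combination 2 * en0 + 2 * e0n - (n : R) * e22)

end PowerSeries

/-- Lemma 2.4(ii): the image `f` of `F = X²Y² + Xⁿ + Yⁿ` in
`B = k[[X,Y]]/(∂F/∂X, ∂F/∂Y)` is nonzero with `f² = 0`. -/
theorem stmt2 (k : Type) [Field k] [CharZero k] (n : ℕ) (hn : 5 ≤ n) :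
    (Ideal.Quotient.mk
        (Ideal.span
          {2 * X (0 : Fin 2) * X 1 ^ 2 + (n : MvPowerSeries (Fin 2) k) * X 0 ^ (n - 1),
           2 * X (0 : Fin 2) ^ 2 * X 1 + (n : MvPowerSeries (Fin 2) k) * X 1 ^ (n - 1)} :
          Ideal (MvPowerSeries (Fin 2) k))
        (X 0 ^ 2 * X 1 ^ 2 + X 0 ^ n + X 1 ^ n) ≠ 0) ∧
    (Ideal.Quotient.mk
        (Ideal.span
          {2 * X (0 : Fin 2) * X 1 ^ 2 + (n : MvPowerSeries (Fin 2) k) * X 0 ^ (n - 1),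
           2 * X (0 : Fin 2) ^ 2 * X 1 + (n : MvPowerSeries (Fin 2) k) * X 1 ^ (n - 1)} :
          Ideal (MvPowerSeries (Fin 2) k))
        (X 0 ^ 2 * X 1 ^ 2 + X 0 ^ n + X 1 ^ n)) ^ 2 = 0 := by
  have hn₀ : (n : k) ≠ 0 := Nat.cast_ne_zero.mpr (by omega)
  constructor
  · rw [Ne, Ideal.Quotient.eq_zero_iff_mem]
    exact notMem_span_jacobian hn (by exact_mod_cast (show n ≠ 4 by omega))
  · rw [← map_pow, Ideal.Quotient.eq_zero_iff_mem]
    exact sq_mem_of_jacobian_mem hn (isUnit_iff_ne_zero.mpr two_ne_zero)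
      (isUnit_iff_ne_zero.mpr hn₀) (Ideal.subset_span (by simp)) (Ideal.subset_span (by simp))
end

section
/- Let k be a field of characteristic zero, n ≥ 5, F = X²Y² + X^n + Y^n ∈ k[[X,Y]], and B = k[[X,Y]]/(∂F/∂X, ∂F/∂Y). Let f be the image of F in B. Then df = 0 in the module of Kähler differentials Ω_{B/k}. -/
/-! By the Leibniz rule `dF = F_X dX + F_Y dY` for any derivation, and in `B` both partial
derivatives are zero by construction. -/

open MvPowerSeries

theorem Derivation.map_sq_mul_sq_add_pow_add_pow {R A M : Type*} [CommSemiring R] [CommRing A]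
    [Algebra R A] [AddCommGroup M] [Module A M] [Module R M] (D : Derivation R A M) (a b : A)
    (n : ℕ) :
    D (a ^ 2 * b ^ 2 + a ^ n + b ^ n) =
      (2 * a * b ^ 2 + n * a ^ (n - 1)) • D a + (2 * a ^ 2 * b + n * b ^ (n - 1)) • D b := by
  simp only [map_add, Derivation.leibniz, Derivation.leibniz_pow, ← Nat.cast_smul_eq_nsmul A,
    smul_smul, add_smul]
  simp only [Nat.cast_ofNat, Nat.add_one_sub_one, pow_one]
  rw [mul_comm (a ^ 2), mul_comm (b ^ 2), mul_right_comm 2 b, mul_right_comm 2 a]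
  abel

theorem KaehlerDifferential.D_mk_sq_mul_sq_add_pow_add_pow {R A : Type*} [CommRing R]
    [CommRing A] [Algebra R A] (a b : A) (n : ℕ) :
    KaehlerDifferential.D R (A ⧸ Ideal.span {2 * a * b ^ 2 + n * a ^ (n - 1),
        2 * a ^ 2 * b + n * b ^ (n - 1)})
      (Ideal.Quotient.mk _ (a ^ 2 * b ^ 2 + a ^ n + b ^ n)) = 0 := by
  set I := Ideal.span {2 * a * b ^ 2 + n * a ^ (n - 1), 2 * a ^ 2 * b + n * b ^ (n - 1)}
  have hX : Ideal.Quotient.mk I (2 * a * b ^ 2 + n * a ^ (n - 1)) = 0 :=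
    Ideal.Quotient.eq_zero_iff_mem.mpr (Ideal.subset_span (Set.mem_insert _ _))
  have hY : Ideal.Quotient.mk I (2 * a ^ 2 * b + n * b ^ (n - 1)) = 0 :=
    Ideal.Quotient.eq_zero_iff_mem.mpr (Ideal.subset_span (Set.mem_insert_of_mem _ rfl))
  simp only [map_add, map_mul, map_pow, map_natCast, map_ofNat] at hX hY
  have hF : Ideal.Quotient.mk I (a ^ 2 * b ^ 2 + a ^ n + b ^ n) =
      Ideal.Quotient.mk I a ^ 2 * Ideal.Quotient.mk I b ^ 2 + Ideal.Quotient.mk I a ^ n +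
        Ideal.Quotient.mk I b ^ n := by
    simp only [map_add, map_mul, map_pow]
  rw [hF, Derivation.map_sq_mul_sq_add_pow_add_pow, hX, hY, zero_smul, zero_smul, add_zero]

set_option synthInstance.maxHeartbeats 1000000 in
theorem stmt3_general (k : Type) [Field k] (n : ℕ) :
    KaehlerDifferential.D k
      (MvPowerSeries (Fin 2) k ⧸
        (Ideal.span
          {2 * X (0 : Fin 2) * X 1 ^ 2 + (n : MvPowerSeries (Fin 2) k) * X 0 ^ (n - 1),
           2 * X (0 : Fin 2) ^ 2 * X 1 + (n : MvPowerSeries (Fin 2) k) * X 1 ^ (n - 1)} :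
          Ideal (MvPowerSeries (Fin 2) k)))
      (Ideal.Quotient.mk _ (X 0 ^ 2 * X 1 ^ 2 + X 0 ^ n + X 1 ^ n)) = 0 :=
  KaehlerDifferential.D_mk_sq_mul_sq_add_pow_add_pow (X 0) (X 1) n

set_option synthInstance.maxHeartbeats 1000000 in
/-- Lemma 2.4(iii): `df = 0` in `Ω_{B/k}`, where `f` is the image of
`F = X²Y² + Xⁿ + Yⁿ` in `B = k[[X,Y]]/(∂F/∂X, ∂F/∂Y)`. -/
theorem stmt3 (k : Type) [Field k] [CharZero k] (n : ℕ) (hn : 5 ≤ n) :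
    KaehlerDifferential.D k
      (MvPowerSeries (Fin 2) k ⧸
        (Ideal.span
          {2 * X (0 : Fin 2) * X 1 ^ 2 + (n : MvPowerSeries (Fin 2) k) * X 0 ^ (n - 1),
           2 * X (0 : Fin 2) ^ 2 * X 1 + (n : MvPowerSeries (Fin 2) k) * X 1 ^ (n - 1)} :
          Ideal (MvPowerSeries (Fin 2) k)))
      (Ideal.Quotient.mk _ (X 0 ^ 2 * X 1 ^ 2 + X 0 ^ n + X 1 ^ n)) = 0 :=
  stmt3_general k n
end

section
/- Let k be a field of characteristic zero, n ≥ 5, and F = X²Y² + X^n + Y^n ∈ k[[X,Y]]. In k[[X,Y]], the partial derivatives ∂F/∂X and ∂F/∂Y form a regular sequence. -/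
/-!
Put `x = X 0`, `y = X 1`. Then `∂F/∂X = x·u` with `u = 2y² + n·x^{n-2}`, and the prime `x`
divides neither `u` nor `g = ∂F/∂Y`. Multiplying `g` by `2x²y - n·y^{n-1}` gives
`4x⁴y² - n²y^{2n-2}`, and since `2y² ≡ -n·x^{n-2}` modulo `u`, up to a nonzero constant factor this is
congruent to `x^{n+2}` times `2ⁿ·n + (const)·x^{n(n-4)}`, a unit because `n ≥ 5`. So
`x^{n+2} ∈ (u, g)`. Now if `x·u ∣ g·h`, then `h = x·h'` with `u ∣ g·h'`, hence
`u ∣ x^{n+2}·h'`, and `u ∣ h'` because the prime `x` does not divide `u`.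
-/

open MvPowerSeries IsLocalRing RingTheory.Sequence Pointwise

section Divisibility

variable {R : Type*} [CommRing R] [IsDomain R] {x u g p : R}

theorem dvd_of_dvd_prime_mul (hx : Prime x) (hxu : ¬ x ∣ u) (h : u ∣ x * p) : u ∣ p := by
  obtain ⟨q, hq⟩ := h
  obtain ⟨q', rfl⟩ : x ∣ q := (hx.dvd_or_dvd ⟨p, hq.symm⟩).resolve_left hxu
  exact ⟨q', mul_left_cancel₀ hx.ne_zero (by rw [hq]; ring)⟩

theorem dvd_of_dvd_prime_pow_mul (hx : Prime x) (hxu : ¬ x ∣ u) :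
    ∀ N : ℕ, u ∣ x ^ N * p → u ∣ p
  | 0, h => by simpa using h
  | N + 1, h => dvd_of_dvd_prime_pow_mul hx hxu N
      (dvd_of_dvd_prime_mul hx hxu (by rwa [pow_succ', mul_assoc] at h))

theorem mul_dvd_of_dvd_mul_of_pow_mem_span {N : ℕ} (hx : Prime x) (hxu : ¬ x ∣ u)
    (hxg : ¬ x ∣ g) (hN : x ^ N ∈ Ideal.span {u, g}) (h : x * u ∣ g * p) : x * u ∣ p := by
  obtain ⟨p', rfl⟩ : x ∣ p :=
    (hx.dvd_or_dvd (dvd_trans (dvd_mul_right x u) h)).resolve_left hxg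
  have hu : u ∣ g * p' :=
    (mul_dvd_mul_iff_left hx.ne_zero).mp (by simpa [mul_left_comm] using h)
  obtain ⟨a, b, hab⟩ := Ideal.mem_span_pair.mp hN
  have : u ∣ x ^ N * p' := by
    rw [← hab, add_mul, mul_assoc, mul_assoc]
    exact dvd_add (dvd_mul_of_dvd_right (dvd_mul_right u p') a) (dvd_mul_of_dvd_right hu b)
  exact mul_dvd_mul_left x (dvd_of_dvd_prime_pow_mul hx hxu N this)

end Divisibility

theorem pow_mul_mem_span_pair {R : Type*} [CommRing R] (c x y : R) (m : ℕ) :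
    x ^ (m + 7) * (2 ^ (m + 5) * c + c ^ 2 * (-c) ^ (m + 4) * x ^ ((m + 1) * (m + 5))) ∈
      Ideal.span {2 * y ^ 2 + c * x ^ (m + 3), 2 * x ^ 2 * y + c * y ^ (m + 4)} := by
  obtain ⟨G, hG⟩ := sub_dvd_pow_sub_pow (2 * y ^ 2) (-c * x ^ (m + 3)) (m + 4)
  refine Ideal.mem_span_pair.mpr
    ⟨2 ^ (m + 5) * x ^ 4 - c ^ 2 * G, -(2 ^ (m + 4) * (2 * x ^ 2 * y - c * y ^ (m + 4))), ?_⟩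
  linear_combination c ^ 2 * hG

section LocalRing

variable {R : Type*} [CommRing R] [IsLocalRing R]

theorem IsLocalRing.isUnit_add_of_mem_maximalIdeal {a b : R} (ha : IsUnit a)
    (hb : b ∈ maximalIdeal R) : IsUnit (a + b) := by
  have : IsUnit (a + b + -b) := by simpa using ha
  exact (isUnit_or_isUnit_of_isUnit_add this).resolve_right
    (by simpa [mem_maximalIdeal, mem_nonunits_iff] using hb)

theorem isRegular_pair_of_forall_dvd {f g : R} (hf : IsSMulRegular R f)
    (hfm : f ∈ maximalIdeal R) (hgm : g ∈ maximalIdeal R)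
    (hfg : ∀ p, f ∣ g * p → f ∣ p) :
    IsRegular R [f, g] := by
  refine .of_isWeaklyRegular_of_mem_maximalIdeal R
    (List.forall_mem_cons.mpr ⟨hfm, List.forall_mem_singleton.mpr hgm⟩)
    (.cons hf (.cons ?_ (.nil _ _)))
  have hmem (p : R) : p ∈ f • (⊤ : Submodule R R) ↔ f ∣ p := by
    rw [← Submodule.ideal_span_singleton_smul, smul_eq_mul, Ideal.mul_top,
      Ideal.mem_span_singleton]
  exact (isSMulRegular_quotient_iff_mem_of_smul_mem _ g).mpr fun p hp => by
    rw [hmem] at hp ⊢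
    exact hfg p hp

theorem isRegular_two_mul_mul_sq_add_mul_pow [IsDomain R] {x y c : R} (hx : Prime x)
    (hxy : ¬ x ∣ y) (hy : y ∈ maximalIdeal R) (h2 : IsUnit (2 : R)) (hc : IsUnit c) {e : ℕ}
    (he : 4 ≤ e) : IsRegular R [2 * x * y ^ 2 + c * x ^ e, 2 * x ^ 2 * y + c * y ^ e] := by
  obtain ⟨m, rfl⟩ := Nat.exists_eq_add_of_le' he
  set u := 2 * y ^ 2 + c * x ^ (m + 3)
  set g := 2 * x ^ 2 * y + c * y ^ (m + 4)
  have hxm : x ∈ maximalIdeal R := (mem_maximalIdeal x).mpr hx.not_isUnit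
  have hxu : ¬ x ∣ u := fun h => by
    have : x ∣ 2 * y ^ 2 :=
      (dvd_add_left (dvd_mul_of_dvd_right (dvd_pow_self x (by omega)) c)).mp h
    rcases hx.dvd_or_dvd this with h' | h'
    · exact hx.not_isUnit (isUnit_of_dvd_unit h' h2)
    · exact hxy (hx.dvd_of_dvd_pow h')
  have hxg : ¬ x ∣ g := fun h => by
    have : x ∣ c * y ^ (m + 4) := (dvd_add_right
      (dvd_mul_of_dvd_left (dvd_mul_of_dvd_right (dvd_pow_self x two_ne_zero) 2) y)).mp h
    rcases hx.dvd_or_dvd this with h' | h'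
    · exact hx.not_isUnit (isUnit_of_dvd_unit h' hc)
    · exact hxy (hx.dvd_of_dvd_pow h')
  have hε : IsUnit (2 ^ (m + 5) * c + c ^ 2 * (-c) ^ (m + 4) * x ^ ((m + 1) * (m + 5))) :=
    isUnit_add_of_mem_maximalIdeal ((h2.pow _).mul hc)
      (Ideal.mul_mem_left _ _ (Ideal.pow_mem_of_mem _ hxm _ (by positivity)))
  have hN : x ^ (m + 7) ∈ Ideal.span {u, g} :=
    (Ideal.mul_unit_mem_iff_mem _ hε).mp (pow_mul_mem_span_pair c x y m)
  rw [show 2 * x * y ^ 2 + c * x ^ (m + 4) = x * u by ring]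
  refine isRegular_pair_of_forall_dvd ?_ (Ideal.mul_mem_right _ _ hxm) ?_
    fun p => mul_dvd_of_dvd_mul_of_pow_mem_span hx hxu hxg hN
  · exact .of_ne_zero (mul_ne_zero hx.ne_zero fun h => hxu (h ▸ dvd_zero x))
  · exact Ideal.add_mem _ (Ideal.mul_mem_left _ _ hy)
      (Ideal.mul_mem_left _ _ (Ideal.pow_mem_of_mem _ hy _ (by omega)))

end LocalRing

namespace MvPowerSeries

theorem prime_X_zero {R : Type*} [CommRing R] [IsDomain R] (n : ℕ) :
    Prime (X 0 : MvPowerSeries (Fin (n + 1)) R) := by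
  have : IsDomain (MvPowerSeries (Fin n) R) := NoZeroDivisors.to_isDomain _
  rw [← MulEquiv.prime_iff (finSuccEquiv R n), finSuccEquiv_X_zero]
  exact PowerSeries.X_prime

theorem X_dvd_X_iff {σ R : Type*} [CommSemiring R] [Nontrivial R] {i j : σ} :
    (X i : MvPowerSeries σ R) ∣ X j ↔ i = j := by
  refine ⟨fun h => by_contra fun hij => ?_, fun h => h ▸ dvd_rfl⟩
  have := X_dvd_iff.mp h (Finsupp.single j 1) (by simp [Ne.symm hij])
  simp at this

theorem X_mem_maximalIdeal {σ R : Type*} [CommRing R] [IsLocalRing R] (i : σ) :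
    (X i : MvPowerSeries σ R) ∈ maximalIdeal (MvPowerSeries σ R) := by
  simp [mem_maximalIdeal, mem_nonunits_iff, isUnit_iff_constantCoeff]

theorem isUnit_natCast {σ R : Type*} [CommRing R] {n : ℕ} (hn : IsUnit (n : R)) :
    IsUnit (n : MvPowerSeries σ R) :=
  isUnit_iff_constantCoeff.mpr (by simpa using hn)

end MvPowerSeries

/-- In `k[[X,Y]]` (`char k = 0`, `n ≥ 5`), the partial derivatives
`∂F/∂X = 2XY² + nX^{n-1}` and `∂F/∂Y = 2X²Y + nY^{n-1}` of
`F = X²Y² + Xⁿ + Yⁿ` form a regular sequence. -/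
theorem stmt4 (k : Type) [Field k] [CharZero k] (n : ℕ) (hn : 5 ≤ n) :
    RingTheory.Sequence.IsRegular (MvPowerSeries (Fin 2) k)
      [2 * X (0 : Fin 2) * X 1 ^ 2 + (n : MvPowerSeries (Fin 2) k) * X 0 ^ (n - 1),
       2 * X (0 : Fin 2) ^ 2 * X 1 + (n : MvPowerSeries (Fin 2) k) * X 1 ^ (n - 1)] := by
  have : IsDomain (MvPowerSeries (Fin 2) k) := NoZeroDivisors.to_isDomain _
  have hx : Prime (X 0 : MvPowerSeries (Fin 2) k) := prime_X_zero 1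
  have hxy : ¬ (X 0 : MvPowerSeries (Fin 2) k) ∣ X 1 := by simp [X_dvd_X_iff]
  have h2 : IsUnit (2 : MvPowerSeries (Fin 2) k) :=
    isUnit_iff_constantCoeff.mpr (by rw [map_ofNat]; exact two_ne_zero.isUnit)
  have hc : IsUnit (n : MvPowerSeries (Fin 2) k) :=
    isUnit_natCast (Nat.cast_ne_zero.mpr (by omega)).isUnit
  exact isRegular_two_mul_mul_sq_add_mul_pow hx hxy (X_mem_maximalIdeal 1) h2 hc (by omega)
end

section
/- Let k be a field of characteristic zero, n ≥ 5, F = X²Y² + X^n + Y^n ∈ k[[X,Y]]. Then XY³ lies in the ideal (∂F/∂X, ∂F/∂Y) of k[[X,Y]]. -/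
open MvPowerSeries

/-! `2y·∂F/∂X - n x^{n-3}·∂F/∂Y = (4 - n²(xy)^{n-4})·xy³`, and for `n ≥ 5` the factor
`4 - n²(xy)^{n-4}` has constant coefficient `4 ≠ 0`, so it is a unit of `k[[X,Y]]`. -/

theorem mul_mem_span_jacobian_pair {R : Type*} [CommRing R] (x y c : R) {n : ℕ} (hn : 4 ≤ n) :
    (4 - c ^ 2 * (x * y) ^ (n - 4)) * (x * y ^ 3) ∈
      Ideal.span {2 * x * y ^ 2 + c * x ^ (n - 1), 2 * x ^ 2 * y + c * y ^ (n - 1)} := by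
  obtain ⟨m, rfl⟩ : ∃ m, n = m + 4 := ⟨n - 4, by omega⟩
  have hdiff : (4 - c ^ 2 * (x * y) ^ (m + 4 - 4)) * (x * y ^ 3) =
      2 * y * (2 * x * y ^ 2 + c * x ^ (m + 4 - 1)) -
        c * x ^ (m + 1) * (2 * x ^ 2 * y + c * y ^ (m + 4 - 1)) := by
    rw [show m + 4 - 4 = m by omega, show m + 4 - 1 = m + 3 by omega]
    ring
  rw [hdiff]
  exact Ideal.sub_mem _ (Ideal.mul_mem_left _ _ (Ideal.subset_span (Set.mem_insert _ _)))
    (Ideal.mul_mem_left _ _ (Ideal.subset_span (Set.mem_insert_of_mem _ rfl)))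

theorem MvPowerSeries.isUnit_sub_of_constantCoeff_eq_zero {σ R : Type*} [CommRing R]
    {a f : MvPowerSeries σ R} (ha : IsUnit (constantCoeff a)) (hf : constantCoeff f = 0) :
    IsUnit (a - f) := by
  rwa [isUnit_iff_constantCoeff, map_sub, hf, sub_zero]

/-- `XY³` lies in the Jacobian ideal `(∂F/∂X, ∂F/∂Y)` of
`F = X²Y² + Xⁿ + Yⁿ` in `k[[X,Y]]`, `char k = 0`, `n ≥ 5`. -/
theorem stmt5 (k : Type) [Field k] [CharZero k] (n : ℕ) (hn : 5 ≤ n) :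
    X (0 : Fin 2) * X 1 ^ 3 ∈
      (Ideal.span
        {2 * X (0 : Fin 2) * X 1 ^ 2 + (n : MvPowerSeries (Fin 2) k) * X 0 ^ (n - 1),
         2 * X (0 : Fin 2) ^ 2 * X 1 + (n : MvPowerSeries (Fin 2) k) * X 1 ^ (n - 1)} :
        Ideal (MvPowerSeries (Fin 2) k)) := by
  have hunit : IsUnit (4 - (n : MvPowerSeries (Fin 2) k) ^ 2 * (X 0 * X 1) ^ (n - 4)) := by
    refine isUnit_sub_of_constantCoeff_eq_zero ?_ ?_
    · simp [map_ofNat]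
    · simp [zero_pow (show n - 4 ≠ 0 by omega)]
  exact (Ideal.unit_mul_mem_iff_mem _ hunit).mp
    (mul_mem_span_jacobian_pair _ _ _ (by omega))
end

section
/- Let (R, m, k) be a local algebra over a field L such that some power of m is zero, the composite field extension L → R → R/m = k is separable, and Ω_{R/L} = 0. Then m = 0, i.e., R is a field. -/
/-- A (possibly transcendental) field extension `L ⊆ K` is separable if every
finitely generated subextension admits a separating transcendence basis: a
subset `t` of the subextension which is algebraically independent over `L`
and over which the subextension is separably algebraic. -/
def IsSeparableFieldExtension (L K : Type) [Field L] [Field K] [Algebra L K] : Prop :=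
  ∀ s : Finset K, ∃ t : Set K,
    t ⊆ (IntermediateField.adjoin L (s : Set K) : Set K) ∧
    AlgebraicIndependent L ((↑) : t → K) ∧
    ∀ x ∈ IntermediateField.adjoin L (s : Set K),
      IsIntegral (IntermediateField.adjoin L t) x ∧
      (minpoly (IntermediateField.adjoin L t) x).Separable

/-!
Since `m` is nilpotent it suffices to show `m ⊆ m²`. For `x ∈ m`, the relation `dx = 0` in
`Ω_{R/L}` is a consequence of finitely many Leibniz relations, involving a finite set `s ⊆ R`.
The subfield `E` of `k` generated by the residues of `s` is separably generated, hence formally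
smooth over `L`, so it lifts to `σ : E → R` (again because `m` is nilpotent). Extending
`π ∘ σ : E → R/m²` to an `L`-linear `T : k → R/m²`, the map `g = π - T ∘ res : R → R/m²` obeys
the Leibniz rule on `s`, because `a - σ(res a) ∈ m` and products of two such terms die in `R/m²`.
Hence `0 = g x = π x`, i.e. `x ∈ m²`.
-/

theorem IsSeparableFieldExtension.formallySmooth_adjoin {L K : Type} [Field L] [Field K]
    [Algebra L K] (h : IsSeparableFieldExtension L K) (s : Finset K) :
    Algebra.FormallySmooth L (IntermediateField.adjoin L (s : Set K)) := by
  obtain ⟨t, hts, ht, hsep⟩ := h s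
  set E := IntermediateField.adjoin L (s : Set K)
  set F := IntermediateField.adjoin L t
  have hFE : F ≤ E := IntermediateField.adjoin_le_iff.2 hts
  let _ : Algebra F E := (IntermediateField.inclusion hFE).toAlgebra
  have : IsScalarTower L F E := IsScalarTower.of_algebraMap_eq fun _ => rfl
  have : IsScalarTower F E K := IsScalarTower.of_algebraMap_eq fun _ => rfl
  have : Algebra.FormallySmooth L F := by
    have := Algebra.FormallySmooth.adjoin_of_algebraicIndependent ht
    rwa [Subtype.range_coe] at this
  have : Algebra.IsSeparable F E :=
    ⟨fun y => IsSeparable.of_algHom (IsScalarTower.toAlgHom F E K) (hsep y y.2).2⟩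
  have := Algebra.FormallyEtale.of_isSeparable F E
  exact Algebra.FormallySmooth.comp L F E

theorem Ideal.Quotient.mk_sq_mul_sub_mul {R : Type*} [CommRing R] {I : Ideal R} {a a' b b' : R}
    (ha : a - a' ∈ I) (hb : b - b' ∈ I) :
    mk (I ^ 2) (a * b) - mk (I ^ 2) (a' * b') =
      a • (mk (I ^ 2) b - mk (I ^ 2) b') + b • (mk (I ^ 2) a - mk (I ^ 2) a') := by
  have h : mk (I ^ 2) ((a - a') * (b - b')) = 0 :=
    eq_zero_iff_mem.2 (pow_two I ▸ Ideal.mul_mem_mul ha hb)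
  simp only [Algebra.smul_def, algebraMap_eq, map_sub, map_mul] at h ⊢
  linear_combination -h

universe u

open Finsupp in
theorem KaehlerDifferential.exists_finset_forall_eq_zero_of_D_eq_zero {R S : Type*} [CommRing R]
    [CommRing S] [Algebra R S] {x : S} (hx : KaehlerDifferential.D R S x = 0) :
    ∃ s : Finset S, ∀ (M : Type u) [AddCommGroup M] [Module R M] [Module S M]
      [IsScalarTower R S M] (g : S →ₗ[R] M),
      (∀ a ∈ s, ∀ b ∈ s, g (a * b) = a • g b + b • g a) → g x = 0 := by
  classical
  have hmem : single x 1 ∈ KaehlerDifferential.kerTotal R S := by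
    rw [← KaehlerDifferential.kerTotal_eq, LinearMap.mem_ker, linearCombination_single,
      one_smul, hx]
  obtain ⟨T, hTgen, hxT⟩ := Submodule.mem_span_finite_of_mem_span hmem
  -- `kerTotal` is spanned by additivity, Leibniz and `algebraMap` relations; only the Leibniz
  -- relations depend on a pair of elements.
  have hrel : ∀ t ∈ T, ∃ p : S × S, ∀ (M : Type u) [AddCommGroup M] [Module R M] [Module S M]
      [IsScalarTower R S M] (g : S →ₗ[R] M), g 1 = 0 →
      g (p.1 * p.2) = p.1 • g p.2 + p.2 • g p.1 → linearCombination S g t = 0 := by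
    intro t ht
    rcases hTgen ht with (⟨p, rfl⟩ | ⟨p, rfl⟩) | ⟨r, rfl⟩
    · exact ⟨p, fun M _ _ _ _ g _ _ => by simp⟩
    · exact ⟨p, fun M _ _ _ _ g _ h => by simp [h, add_comm]⟩
    · exact ⟨(1, 1), fun M _ _ _ _ g h1 _ => by simp [Algebra.algebraMap_eq_smul_one, h1]⟩
  choose! p hp using hrel
  refine ⟨insert 1 (T.biUnion fun t => {(p t).1, (p t).2}), fun M _ _ _ _ g hg => ?_⟩
  have h1 : g 1 = 0 := by
    simpa using hg 1 (Finset.mem_insert_self _ _) 1 (Finset.mem_insert_self _ _)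
  have hT : (T : Set (S →₀ S)) ⊆ LinearMap.ker (linearCombination S g) := fun t ht =>
    hp t ht M g h1 (hg _ (Finset.mem_insert_of_mem (Finset.mem_biUnion.2 ⟨t, ht, by simp⟩))
      _ (Finset.mem_insert_of_mem (Finset.mem_biUnion.2 ⟨t, ht, by simp⟩)))
  simpa using Submodule.span_le.2 hT hxT

open IsLocalRing Ideal.Quotient

theorem IsLocalRing.mk_sub_residue_mul {R : Type*} [CommRing R] [IsLocalRing R]
    {E : Subring (ResidueField R)} (σ : E →+* R)
    (hσ : ∀ y, residue R (σ y) = y) (T : ResidueField R → R ⧸ maximalIdeal R ^ 2)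
    (hT : ∀ y : E, T y = mk _ (σ y)) {a b : R} (ha : residue R a ∈ E) (hb : residue R b ∈ E) :
    mk _ (a * b) - T (residue R (a * b)) =
      a • (mk _ b - T (residue R b)) + b • (mk _ a - T (residue R a)) := by
  have hlift : ∀ r (hr : residue R r ∈ E), r - σ ⟨residue R r, hr⟩ ∈ maximalIdeal R :=
    fun r hr => by rw [← residue_eq_zero_iff, map_sub, hσ, sub_self]
  have hab : residue R (a * b) = ((⟨_, ha⟩ * ⟨_, hb⟩ : E) : ResidueField R) := map_mul _ _ _
  have hTa : T (residue R a) = mk _ (σ ⟨_, ha⟩) := hT ⟨_, ha⟩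
  have hTb : T (residue R b) = mk _ (σ ⟨_, hb⟩) := hT ⟨_, hb⟩
  rw [hab, hT, map_mul σ, hTa, hTb]
  exact Ideal.Quotient.mk_sq_mul_sub_mul (hlift a ha) (hlift b hb)

theorem IsLocalRing.mem_maximalIdeal_sq_of_D_eq_zero {L R : Type} [Field L] [CommRing R]
    [IsLocalRing R] [Algebra L R] (hm : IsNilpotent (maximalIdeal R))
    (hsep : IsSeparableFieldExtension L (ResidueField R)) {x : R} (hx : x ∈ maximalIdeal R)
    (hdx : KaehlerDifferential.D L R x = 0) : x ∈ maximalIdeal R ^ 2 := by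
  classical
  obtain ⟨s, hs⟩ := KaehlerDifferential.exists_finset_forall_eq_zero_of_D_eq_zero hdx
  let res : R →ₐ[L] ResidueField R := IsScalarTower.toAlgHom L R _
  let π : R →ₐ[L] R ⧸ maximalIdeal R ^ 2 := Ideal.Quotient.mkₐ L _
  let E := IntermediateField.adjoin L ((s.image (residue R) : Finset _) : Set (ResidueField R))
  have := hsep.formallySmooth_adjoin (s.image (residue R))
  have hker : IsNilpotent (RingHom.ker (res : R →+* ResidueField R)) := ker_residue (R := R) ▸ hm
  let σ : E →ₐ[L] R := Algebra.FormallySmooth.liftOfSurjective E.val res residue_surjective hker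
  have hσ : ∀ y, residue R (σ y) = y :=
    Algebra.FormallySmooth.liftOfSurjective_apply E.val res residue_surjective hker
  obtain ⟨ι, hι⟩ := E.val.toLinearMap.exists_leftInverse_of_injective
    (LinearMap.ker_eq_bot.2 E.val.injective)
  let T := (π.comp σ).toLinearMap ∘ₗ ι
  have hresE : ∀ a ∈ s, residue R a ∈ E := fun a ha =>
    IntermediateField.subset_adjoin _ _ (by simpa using ⟨a, ha, rfl⟩)
  have hgx := hs _ (π.toLinearMap - T ∘ₗ res.toLinearMap) fun a ha b hb =>
    mk_sub_residue_mul (E := E.toSubring) (σ : E →+* R) hσ T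
      (fun y => congr_arg (π.comp σ) (LinearMap.congr_fun hι y)) (hresE a ha) (hresE b hb)
  change mk _ x - T (residue R x) = 0 at hgx
  rwa [(residue_eq_zero_iff x).2 hx, map_zero, sub_zero, eq_zero_iff_mem] at hgx

/-- Lemma 3.4: let `(R, m, k)` be a local algebra over a field `L` with
`mⁿ = 0` for some `n`, residue field separable over `L`, and `Ω_{R/L} = 0`.
Then `R` is a field. -/
theorem stmt9 (L : Type) [Field L]
    (R : Type) [CommRing R] [IsLocalRing R] [Algebra L R]
    (hm : ∃ n : ℕ, IsLocalRing.maximalIdeal R ^ n = ⊥)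
    (hsep : IsSeparableFieldExtension L (IsLocalRing.ResidueField R))
    (homega : Subsingleton (KaehlerDifferential L R)) :
    IsField R := by
  obtain ⟨n, hn⟩ := hm
  have hidem : IsIdempotentElem (maximalIdeal R) := by
    refine le_antisymm Ideal.mul_le_right fun x hx => ?_
    rw [← sq]
    exact mem_maximalIdeal_sq_of_D_eq_zero ⟨n, hn⟩ hsep hx (Subsingleton.elim _ _)
  rw [isField_iff_maximalIdeal_eq, ← hidem.pow_succ_eq n, pow_succ, hn, Ideal.bot_mul]
end

section
/- Let k be a perfect field and A a k-algebra whose localization at every maximal ideal is Noetherian. If Ω_{A/k} = 0, then A is reduced. -/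
/-!
Over a perfect field `k` every field extension `L` is formally smooth. Given a surjection
`ψ : B → L` of `k`-algebras with square-zero kernel, Zorn's lemma gives a maximal subfield of `B`
on which `ψ` is injective, and its image is all of `L`: a transcendental element lifts to any
preimage, a separable one lifts to a root of its lifted minimal polynomial by Newton's method, and
in characteristic `p`, starting from the subfield of `p`-th powers, every remaining element is
purely inseparable of degree `p` and lifts to any preimage.

For a Noetherian local `k`-algebra `R` with `Ω_{R/k} = 0` the residue field therefore lifts to
`R/m²`; formal unramifiedness forces the composite `R → κ → R/m²` to be the projection, so
`m = m²`, and Nakayama gives `m = 0`. A ring whose localizations at maximal ideals are fields is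
reduced.
-/

open Polynomial

def powSubalgebra (k B : Type*) [CommSemiring k] [CommSemiring B] [Algebra k B] (p : ℕ)
    [ExpChar k p] [PerfectRing k p] [ExpChar B p] : Subalgebra k B where
  carrier := Set.range (· ^ p)
  mul_mem' := by rintro _ _ ⟨a, rfl⟩ ⟨b, rfl⟩; exact ⟨a * b, mul_pow a b p⟩
  one_mem' := ⟨1, one_pow p⟩
  add_mem' := by rintro _ _ ⟨a, rfl⟩ ⟨b, rfl⟩; exact ⟨a + b, add_pow_expChar a b p⟩
  zero_mem' := ⟨0, zero_pow (expChar_pos B p).ne'⟩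
  algebraMap_mem' r := by
    obtain ⟨s, rfl⟩ := surjective_frobenius k p r
    exact ⟨algebraMap k B s, (map_pow (algebraMap k B) s p).symm⟩

section LiftedSubfield

variable {k B L : Type*} [Field k] [CommRing B] [Field L] [Algebra k B] [Algebra k L]
  (ψ : B →ₐ[k] L)

def IsLiftedSubfield (C : Subalgebra k B) : Prop :=
  (∀ c ∈ C, ψ c = 0 → c = 0) ∧ ∀ c ∈ C, c ≠ 0 → ∃ d ∈ C, c * d = 1

variable {ψ}

theorem isLiftedSubfield_bot : IsLiftedSubfield ψ ⊥ := by
  refine ⟨fun c hc h ↦ ?_, fun c hc h ↦ ?_⟩ <;> obtain ⟨r, rfl⟩ := Algebra.mem_bot.1 hc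
  · rw [ψ.commutes, map_eq_zero_iff _ (algebraMap k L).injective] at h
    rw [h, map_zero]
  · have hr : r ≠ 0 := by rintro rfl; exact h (map_zero _)
    exact ⟨algebraMap k B r⁻¹, Subalgebra.algebraMap_mem _ _, by
      rw [← map_mul, mul_inv_cancel₀ hr, map_one]⟩

theorem IsLiftedSubfield.iSup {ι : Type*} [Nonempty ι] {C : ι → Subalgebra k B}
    (hC : Directed (· ≤ ·) C) (h : ∀ i, IsLiftedSubfield ψ (C i)) :
    IsLiftedSubfield ψ (⨆ i, C i) := by
  have hmem (c : B) : c ∈ ⨆ i, C i ↔ ∃ i, c ∈ C i := by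
    rw [← SetLike.mem_coe, Subalgebra.coe_iSup_of_directed hC, Set.mem_iUnion]; rfl
  refine ⟨fun c hc ↦ ?_, fun c hc ↦ ?_⟩ <;> obtain ⟨i, hi⟩ := (hmem c).1 hc
  · exact (h i).1 c hi
  · intro hc0
    obtain ⟨d, hd, hcd⟩ := (h i).2 c hi hc0
    exact ⟨d, (hmem d).2 ⟨i, hd⟩, hcd⟩

theorem IsLiftedSubfield.exists_maximal {C₀ : Subalgebra k B} (h₀ : IsLiftedSubfield ψ C₀) :
    ∃ M, C₀ ≤ M ∧ Maximal (IsLiftedSubfield ψ) M := by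
  obtain ⟨M, -, hM⟩ := zorn_le_nonempty₀ {C | C₀ ≤ C ∧ IsLiftedSubfield ψ C}
    (fun c hc hchain y hy ↦ by
      have : Nonempty c := ⟨⟨y, hy⟩⟩
      have hdir := hchain.directedOn.directed_val
      exact ⟨⨆ C : c, C.1, ⟨(hc hy).1.trans (le_iSup (fun C : c ↦ C.1) ⟨y, hy⟩),
        .iSup hdir fun C ↦ (hc C.2).2⟩, fun z hz ↦ le_iSup (fun C : c ↦ C.1) ⟨z, hz⟩⟩)
    C₀ ⟨le_rfl, h₀⟩
  exact ⟨M, hM.prop.1, hM.prop.2, fun C hC hle ↦ hM.2 ⟨hM.prop.1.trans hle, hC⟩ hle⟩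

theorem exists_isLiftedSubfield_le (hu : ∀ b, ψ b ≠ 0 → IsUnit b) (D : Subalgebra k B)
    (hD : ∀ z ∈ D, ψ z = 0 → z = 0) : ∃ C, IsLiftedSubfield ψ C ∧ D ≤ C := by
  have hinj : Function.Injective (ψ.comp D.val) :=
    (injective_iff_map_eq_zero _).2 fun z hz ↦ Subtype.ext (hD z z.2 hz)
  have : IsDomain D := hinj.isDomain (ψ.comp D.val).toRingHom
  let g : FractionRing D →ₐ[k] B := IsLocalization.liftAlgHom (M := nonZeroDivisors D)
    (f := D.val) fun y ↦ hu _ fun h ↦ nonZeroDivisors.coe_ne_zero y (Subtype.ext (hD _ y.1.2 h))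
  have hg : Function.Injective (ψ.comp g) := (ψ.comp g).toRingHom.injective
  refine ⟨g.range, ⟨?_, ?_⟩, fun d hd ↦
    ⟨algebraMap D _ ⟨d, hd⟩, IsLocalization.lift_eq _ _⟩⟩
  · rintro _ ⟨q, rfl⟩ h
    rw [(injective_iff_map_eq_zero _).1 hg q h, map_zero]
  · rintro _ ⟨q, rfl⟩ hq
    have hq0 : q ≠ 0 := by rintro rfl; exact hq (map_zero g)
    refine ⟨g q⁻¹, ⟨q⁻¹, rfl⟩, ?_⟩
    change g q * g q⁻¹ = 1
    rw [← map_mul, mul_inv_cancel₀ hq0, map_one]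

namespace IsLiftedSubfield

variable {M : Subalgebra k B} (hM : IsLiftedSubfield ψ M)
include hM

theorem injective : Function.Injective (ψ.comp M.val) :=
  (injective_iff_map_eq_zero _).2 fun c hc ↦ Subtype.ext (hM.1 c c.2 hc)

noncomputable def image : IntermediateField k L :=
  (ψ.comp M.val).range.toIntermediateField fun x ⟨c, hc⟩ ↦ by
    subst hc
    by_cases hc0 : (c : B) = 0
    · exact ⟨0, by simp [hc0]⟩
    obtain ⟨d, hd, hcd⟩ := hM.2 c c.2 hc0
    refine ⟨⟨d, hd⟩, (inv_eq_of_mul_eq_one_right ?_).symm⟩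
    simp [← map_mul, hcd]

noncomputable def equiv : M ≃ₐ[k] hM.image := AlgEquiv.ofInjective _ hM.injective

theorem algebraMap_equiv (c : M) : algebraMap hM.image L (hM.equiv c) = ψ c := rfl

theorem mem_image {x : L} : x ∈ hM.image ↔ ∃ c ∈ M, ψ c = x := by
  change x ∈ (ψ.comp M.val).range ↔ _
  simp

theorem apply_aeval (b : B) (f : M[X]) :
    ψ (aeval b f) = aeval (ψ b) (f.map (hM.equiv : M →+* hM.image)) := by
  rw [aeval_def, aeval_def, eval₂_map]
  exact hom_eval₂ f _ ψ.toRingHom b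

theorem apply_mem_image {c : B} (hc : c ∈ M) : ψ c ∈ hM.image :=
  hM.mem_image.2 ⟨c, hc, rfl⟩

theorem aeval_eq_zero_of_transcendental {b : B} (hb : Transcendental hM.image (ψ b))
    {f : M[X]} (hf : ψ (aeval b f) = 0) : aeval b f = 0 := by
  rw [apply_aeval hM] at hf
  have : f.map (hM.equiv : M →+* hM.image) = 0 := by
    by_contra h
    exact hb ⟨_, h, hf⟩
  rw [(Polynomial.map_eq_zero_iff hM.equiv.injective).1 this, map_zero]

theorem aeval_eq_zero_of_aeval_minpoly {b : B}
    (hb : aeval b ((minpoly hM.image (ψ b)).map (hM.equiv.symm : hM.image →+* M)) = 0)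
    {f : M[X]} (hf : ψ (aeval b f) = 0) : aeval b f = 0 := by
  rw [apply_aeval hM] at hf
  obtain ⟨g, hg⟩ := Polynomial.map_dvd (hM.equiv.symm : hM.image →+* M) (minpoly.dvd _ _ hf)
  rw [Polynomial.map_map, show (hM.equiv.symm : hM.image →+* M).comp hM.equiv = RingHom.id M from
    RingHom.ext hM.equiv.symm_apply_apply, Polynomial.map_id] at hg
  rw [hg, map_mul, hb, zero_mul]

theorem exists_section_of_image_eq_top (h : hM.image = ⊤) :
    ∃ s : L →ₐ[k] B, ψ.comp s = AlgHom.id k L := by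
  have hsurj : Function.Surjective (ψ.comp M.val) := fun x ↦ by
    obtain ⟨c, hc, rfl⟩ := hM.mem_image.1 (h ▸ IntermediateField.mem_top : x ∈ hM.image)
    exact ⟨⟨c, hc⟩, rfl⟩
  let e := AlgEquiv.ofBijective _ ⟨hM.injective, hsurj⟩
  exact ⟨M.val.comp e.symm.toAlgHom, AlgHom.ext e.apply_symm_apply⟩

end IsLiftedSubfield

section SquareZero

variable (hψ : Function.Surjective ψ) (hsq : RingHom.ker ψ ^ 2 = ⊥)
include hsq

theorem sq_eq_zero_of_apply_eq_zero {a : B} (ha : ψ a = 0) : a ^ 2 = 0 := by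
  rw [← Ideal.mem_bot, ← hsq]
  exact Ideal.pow_mem_pow ha 2

include hψ

theorem isUnit_of_apply_ne_zero {b : B} (hb : ψ b ≠ 0) : IsUnit b := by
  obtain ⟨c, hc⟩ := hψ (ψ b)⁻¹
  have hn : IsNilpotent (b * c - 1) := ⟨2, sq_eq_zero_of_apply_eq_zero hsq <| by
    rw [map_sub, map_mul, hc, mul_inv_cancel₀ hb, map_one, sub_self]⟩
  have := hn.isUnit_one_add
  rw [add_sub_cancel] at this
  exact isUnit_of_mul_isUnit_left this

namespace IsLiftedSubfield

variable {M : Subalgebra k B}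

theorem mem_of_maximal (hM : Maximal (IsLiftedSubfield ψ) M) {b : B}
    (hb : ∀ f : M[X], ψ (aeval b f) = 0 → aeval b f = 0) : b ∈ M := by
  let D : Subalgebra k B := (aeval (R := M) b).range.restrictScalars k
  obtain ⟨C, hC, hDC⟩ :=
    exists_isLiftedSubfield_le (fun _ ↦ isUnit_of_apply_ne_zero hψ hsq) D fun _ ⟨f, hf⟩ ↦
      hf ▸ hb f
  have hMD : M ≤ D := fun c hc ↦ ⟨Polynomial.C ⟨c, hc⟩, by simp⟩
  exact hM.2 hC (hMD.trans hDC) (hDC ⟨X, aeval_X b⟩)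

theorem isAlgebraic_of_maximal (hM : Maximal (IsLiftedSubfield ψ) M) (x : L) :
    IsAlgebraic hM.prop.image x := by
  obtain ⟨b, rfl⟩ := hψ x
  by_contra h
  have hb := mem_of_maximal hψ hsq hM fun f hf ↦ hM.prop.aeval_eq_zero_of_transcendental h hf
  exact h (isAlgebraic_algebraMap (⟨_, hM.prop.apply_mem_image hb⟩ : hM.prop.image))

theorem mem_image_of_separable (hM : Maximal (IsLiftedSubfield ψ) M) {x : L}
    (hx : (minpoly hM.prop.image x).Separable) : x ∈ hM.prop.image := by
  set K := hM.prop.image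
  set e := hM.prop.equiv
  set N := (minpoly K x).map (e.symm : K →+* M)
  have hN : N.map (e : M →+* K) = minpoly K x := by
    rw [Polynomial.map_map, show (e : M →+* K).comp e.symm = RingHom.id K from
      RingHom.ext e.apply_symm_apply, Polynomial.map_id]
  obtain ⟨b₀, rfl⟩ := hψ x
  have h₀ : ψ (aeval b₀ N) = 0 := by rw [hM.prop.apply_aeval, hN, minpoly.aeval]
  have h₁ : ψ (aeval b₀ (derivative N)) ≠ 0 := by
    rw [hM.prop.apply_aeval, ← derivative_map, hN]
    exact hx.aeval_derivative_ne_zero (minpoly.aeval _ _)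
  obtain ⟨b, ⟨hnil, hb⟩, -⟩ := existsUnique_nilpotent_sub_and_aeval_eq_zero
    ⟨2, sq_eq_zero_of_apply_eq_zero hsq h₀⟩ (isUnit_of_apply_ne_zero hψ hsq h₁)
  have hψb : ψ b = ψ b₀ := (sub_eq_zero.1 (map_sub ψ b₀ b ▸ (hnil.map ψ).eq_zero)).symm
  have hb' : aeval b ((minpoly K (ψ b)).map (e.symm : K →+* M)) = 0 := by rw [hψb]; exact hb
  rw [← hψb]
  exact hM.prop.apply_mem_image
    (mem_of_maximal hψ hsq hM fun f hf ↦ hM.prop.aeval_eq_zero_of_aeval_minpoly hb' hf)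

theorem mem_image_of_pow_mem (p : ℕ) [Fact p.Prime] [CharP L p]
    (hM : Maximal (IsLiftedSubfield ψ) M) {b : B} (hb : b ^ p ∈ M) : ψ b ∈ hM.prop.image := by
  set K := hM.prop.image
  set a := hM.prop.equiv ⟨b ^ p, hb⟩
  have ha : algebraMap K L a = ψ b ^ p := by rw [algebraMap_equiv, map_pow]
  by_contra hx
  have hirr : Irreducible (X ^ p - C a) := X_pow_sub_C_irreducible_of_prime Fact.out fun c hc ↦ by
    refine hx (frobenius_inj L p (?_ : (c : L) ^ p = ψ b ^ p) ▸ c.2)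
    rw [← ha, ← hc, map_pow]; rfl
  have hmin : minpoly K (ψ b) = X ^ p - C a := (minpoly.eq_of_irreducible_of_monic hirr
    (by rw [map_sub, map_pow, aeval_X, aeval_C, ha, sub_self])
    (monic_X_pow_sub_C _ (Fact.out : p.Prime).ne_zero)).symm
  refine hx (hM.prop.apply_mem_image (mem_of_maximal hψ hsq hM fun f hf ↦
    hM.prop.aeval_eq_zero_of_aeval_minpoly ?_ hf))
  rw [hmin, Polynomial.map_sub, Polynomial.map_pow, Polynomial.map_X, Polynomial.map_C]
  simp [a]

theorem image_eq_top_of_charZero [CharZero L] (hM : Maximal (IsLiftedSubfield ψ) M) :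
    hM.prop.image = ⊤ :=
  eq_top_iff.2 fun x _ ↦ mem_image_of_separable hψ hsq hM
    (minpoly.irreducible (isAlgebraic_of_maximal hψ hsq hM x).isIntegral).separable

theorem image_eq_top_of_charP (p : ℕ) [Fact p.Prime] [CharP L p]
    (hM : Maximal (IsLiftedSubfield ψ) M) (hp : ∀ b : B, b ^ p ∈ M) : hM.prop.image = ⊤ :=
  eq_top_iff.2 fun x _ ↦ by
    obtain ⟨b, rfl⟩ := hψ x
    exact mem_image_of_pow_mem hψ hsq p hM (hp b)

end IsLiftedSubfield

theorem isLiftedSubfield_powSubalgebra (p : ℕ) [Fact p.Prime] [CharP k p] [PerfectRing k p]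
    [CharP B p] : IsLiftedSubfield ψ (powSubalgebra k B p) := by
  have hker {y : B} (hy : ψ y = 0) : y ^ p = 0 := by
    rw [← Nat.sub_add_cancel (Fact.out : p.Prime).two_le, pow_add,
      sq_eq_zero_of_apply_eq_zero hsq hy, mul_zero]
  refine ⟨?_, ?_⟩ <;> rintro _ ⟨y, rfl⟩ hy
  · exact hker (pow_eq_zero_iff (Fact.out : p.Prime).ne_zero |>.1 (map_pow ψ y p ▸ hy))
  · obtain ⟨u, rfl⟩ := isUnit_of_apply_ne_zero hψ hsq fun h ↦ hy (hker h)
    exact ⟨(u⁻¹ : Bˣ) ^ p, ⟨_, rfl⟩, by simp only [← mul_pow, Units.mul_inv, one_pow]⟩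

end SquareZero

end LiftedSubfield

theorem AlgHom.exists_section_of_sq_eq_bot {k B L : Type*} [Field k] [PerfectField k]
    [CommRing B] [Field L] [Algebra k B] [Algebra k L] (ψ : B →ₐ[k] L)
    (hψ : Function.Surjective ψ) (hsq : RingHom.ker ψ ^ 2 = ⊥) :
    ∃ s : L →ₐ[k] B, ψ.comp s = AlgHom.id k L := by
  obtain ⟨p, hp⟩ := ExpChar.exists k
  cases hp with
  | zero =>
    have : CharZero L := charZero_of_injective_algebraMap (algebraMap k L).injective
    obtain ⟨M, -, hM⟩ := (isLiftedSubfield_bot (ψ := ψ)).exists_maximal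
    exact hM.prop.exists_section_of_image_eq_top
      (IsLiftedSubfield.image_eq_top_of_charZero hψ hsq hM)
  | prime hp =>
    have := Fact.mk hp
    have : Nontrivial B := ψ.toRingHom.domain_nontrivial
    have : CharP B p := charP_of_injective_algebraMap' k p
    have : CharP L p := charP_of_injective_algebraMap' k p
    obtain ⟨M, hM₀, hM⟩ := (isLiftedSubfield_powSubalgebra hψ hsq p).exists_maximal
    exact hM.prop.exists_section_of_image_eq_top
      (IsLiftedSubfield.image_eq_top_of_charP hψ hsq p hM fun b ↦ hM₀ ⟨b, rfl⟩)

theorem Algebra.FormallySmooth.of_perfectField_of_field (k L : Type*) [Field k] [Field L]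
    [Algebra k L] [PerfectField k] : Algebra.FormallySmooth k L := by
  let f : MvPolynomial L k →ₐ[k] L := MvPolynomial.aeval _root_.id
  have hf : Function.Surjective f := fun x ↦ ⟨.X x, MvPolynomial.aeval_X _ _⟩
  rw [Algebra.FormallySmooth.iff_split_surjection f hf]
  apply f.kerSquareLift.exists_section_of_sq_eq_bot
    (Ideal.Quotient.lift_surjective_of_surjective _ _ hf)
  convert Ideal.cotangentIdeal_square (RingHom.ker f.toRingHom) using 2
  exact f.ker_kerSquareLift

open IsLocalRing in
theorem IsLocalRing.isField_of_formallyUnramified (k R : Type*) [Field k] [CommRing R]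
    [IsLocalRing R] [IsNoetherianRing R] [Algebra k R] [Algebra.FormallyUnramified k R]
    [Algebra.FormallySmooth k (ResidueField R)] : IsField R := by
  set m := maximalIdeal R
  let κ := IsScalarTower.toAlgHom k R (ResidueField R)
  have hκ : RingHom.ker κ = m := ker_residue
  let π : R ⧸ m ^ 2 →ₐ[k] ResidueField R :=
    Ideal.Quotient.liftₐ _ κ fun a ha ↦ hκ.ge (Ideal.pow_le_self two_ne_zero ha)
  have hπ : Function.Surjective π :=
    Ideal.Quotient.lift_surjective_of_surjective _ _ residue_surjective
  have hker : RingHom.ker π ^ 2 = ⊥ := by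
    rw [show RingHom.ker π = m.map (Ideal.Quotient.mk (m ^ 2)) from
        (Ideal.ker_quotient_lift _ _).trans (congrArg _ hκ),
      ← Ideal.map_pow, Ideal.map_quotient_self]
  let s := Algebra.FormallySmooth.liftOfSurjective (AlgHom.id k _) π hπ ⟨2, hker⟩
  have hsπ : ∀ y, π (s y) = y := Algebra.FormallySmooth.liftOfSurjective_apply _ _ _ _
  have hs : Ideal.Quotient.mkₐ k (m ^ 2) = s.comp κ := by
    refine Algebra.FormallyUnramified.comp_injective _ hker (AlgHom.ext fun r ↦ ?_)
    simp only [AlgHom.comp_apply]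
    rw [Ideal.Quotient.mkₐ_eq_mk, Ideal.Quotient.eq, RingHom.mem_ker, map_sub, hsπ]
    exact sub_eq_zero.mpr rfl
  by_contra hR
  refine ((maximalIdeal_sq_lt_maximalIdeal R).mpr hR).not_ge fun x hx ↦ ?_
  have hκx : κ x = 0 := RingHom.mem_ker.mp (hκ ▸ hx)
  rw [← Ideal.Quotient.eq_zero_iff_mem, ← Ideal.Quotient.mkₐ_eq_mk k, hs, AlgHom.comp_apply,
    hκx, map_zero]

/-- Corollary 3.3(i): if `k` is a perfect field and `A` is a `k`-algebra whose
localization at every maximal ideal is Noetherian, then `Ω_{A/k} = 0`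
implies `A` is reduced. -/
theorem stmt11 (k : Type) [Field k] [PerfectField k]
    (A : Type) [CommRing A] [Algebra k A]
    (hloc : ∀ (m : Ideal A) (hm : m.IsMaximal),
      letI := hm.isPrime; IsNoetherianRing (Localization.AtPrime m))
    (homega : Subsingleton (KaehlerDifferential k A)) :
    IsReduced A := by
  have : Algebra.FormallyUnramified k A := ⟨homega⟩
  refine isReduced_ofLocalizationMaximal A fun m hm ↦ ?_
  have := hloc m hm
  have : Algebra.FormallyUnramified A (Localization.AtPrime m) := .of_isLocalization m.primeCompl
  have : Algebra.FormallyUnramified k (Localization.AtPrime m) := .comp k A _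
  have := Algebra.FormallySmooth.of_perfectField_of_field k
    (IsLocalRing.ResidueField (Localization.AtPrime m))
  let := (IsLocalRing.isField_of_formallyUnramified k (Localization.AtPrime m)).toField
  infer_instance
end

section
/- Let L = F_p(x), let k = F_p(x^{1/p^∞}) be its perfection, and let A = k[Z]/(Z²) viewed as an L-algebra via φ(f) = f + f'·z. Then A is a non-reduced Noetherian local ring with Ω_{A/L} = 0. -/
/-!
The square-zero element `z` is a nonzero nilpotent, and `k[z]/(z²)` is local with residue field
`k`. For the differentials: `z = φ(x) - x` because `D x = 1`, so `A` is generated over `φ(L)`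
by the perfect field `k`. Every element of `k` is a `p`-th power, and
`d(b ^ p) = p b ^ (p - 1) db = 0`, so the universal derivation kills a generating set.
-/

open Polynomial

theorem isLocalHom_of_surjective_of_isNilpotent {R S : Type*} [CommRing R] [CommRing S]
    (f : R →+* S) (hf : Function.Surjective f) (hker : ∀ a, f a = 0 → IsNilpotent a) :
    IsLocalHom f where
  map_nonunit a ha := by
    obtain ⟨u, hu⟩ := ha.exists_right_inv
    obtain ⟨b, rfl⟩ := hf u
    have hab : IsUnit (a * b) := by
      have := (hker (a * b - 1) (by rw [map_sub, map_mul, hu, map_one, sub_self])).isUnit_add_one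
      rwa [sub_add_cancel] at this
    exact isUnit_of_mul_isUnit_left hab

section QuotientSpanXPow

variable {R : Type*} [CommRing R] {n : ℕ}

theorem Polynomial.mk_X_pow_eq_zero :
    Ideal.Quotient.mk (Ideal.span {(X ^ n : R[X])}) (X : R[X]) ^ n = 0 := by
  rw [← map_pow, Ideal.Quotient.eq_zero_iff_mem]
  exact Ideal.mem_span_singleton_self _

theorem Polynomial.mk_X_ne_zero [Nontrivial R] (hn : 1 < n) :
    Ideal.Quotient.mk (Ideal.span {(X ^ n : R[X])}) (X : R[X]) ≠ 0 := by
  rw [Ne, Ideal.Quotient.eq_zero_iff_mem, Ideal.mem_span_singleton, X_pow_dvd_iff]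
  exact fun h ↦ one_ne_zero (by simpa using h 1 hn : (1 : R) = 0)

theorem Polynomial.not_isReduced_quotient_span_X_pow [Nontrivial R] (hn : 1 < n) :
    ¬ IsReduced (R[X] ⧸ Ideal.span {(X ^ n : R[X])}) := fun _ ↦
  mk_X_ne_zero (R := R) hn (IsReduced.eq_zero _ ⟨n, mk_X_pow_eq_zero⟩)

theorem Polynomial.isLocalRing_quotient_span_X_pow [IsLocalRing R] (hn : n ≠ 0) :
    IsLocalRing (R[X] ⧸ Ideal.span {(X ^ n : R[X])}) := by
  let ev : R[X] ⧸ Ideal.span {(X ^ n : R[X])} →+* R :=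
    Ideal.Quotient.lift _ (evalRingHom 0) fun q hq ↦ by
      obtain ⟨r, rfl⟩ := Ideal.mem_span_singleton'.mp hq
      simp [zero_pow hn]
  have hev : Function.Surjective ev := fun r ↦ ⟨Ideal.Quotient.mk _ (C r), by simp [ev]⟩
  have hker : ∀ a, ev a = 0 → IsNilpotent a := by
    intro a ha
    obtain ⟨q, rfl⟩ := Ideal.Quotient.mk_surjective a
    have hXq : X ∣ q := X_dvd_iff.mpr (by simpa [coeff_zero_eq_eval_zero, ev] using ha)
    refine ⟨n, ?_⟩
    rw [← map_pow, Ideal.Quotient.eq_zero_iff_mem, Ideal.mem_span_singleton]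
    exact pow_dvd_pow_of_dvd hXq n
  have := isLocalHom_of_surjective_of_isNilpotent ev hev hker
  exact ev.domain_isLocalRing

theorem Polynomial.adjoin_mk_X_eq_top (I : Ideal R[X]) :
    Algebra.adjoin R {Ideal.Quotient.mk I X} = ⊤ := by
  rw [← Ideal.Quotient.mkₐ_eq_mk R, ← Set.image_singleton, Algebra.adjoin_image, adjoin_X,
    Algebra.map_top, AlgHom.range_eq_top]
  exact Ideal.Quotient.mkₐ_surjective R I

end QuotientSpanXPow

theorem Derivation.map_pow_eq_zero_of_natCast_eq_zero {R A M : Type*} [CommSemiring R]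
    [CommSemiring A] [Algebra R A] [AddCommMonoid M] [Module A M] [Module R M]
    (D : Derivation R A M) {p : ℕ} (hp : (p : A) = 0) (a : A) : D (a ^ p) = 0 := by
  rw [leibniz_pow, ← Nat.cast_smul_eq_nsmul A, hp, zero_smul]

theorem Derivation.map_algebraMap_perfectRing {R A M : Type*} [CommSemiring R]
    [CommSemiring A] [Algebra R A] [AddCommMonoid M] [Module A M] [Module R M]
    (D : Derivation R A M) (k : Type*) [CommRing k] (p : ℕ) [CharP k p] [PerfectRing k p]
    [Algebra k A] (c : k) : D (algebraMap k A c) = 0 := by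
  obtain ⟨b, rfl⟩ := (PerfectRing.bijective_frobenius (R := k) (p := p)).2 c
  rw [map_pow]
  exact D.map_pow_eq_zero_of_natCast_eq_zero (by rw [← _root_.map_natCast (algebraMap k A),
    CharP.cast_eq_zero, map_zero]) _

theorem KaehlerDifferential.subsingleton_of_adjoin_eq_top {R S : Type*} [CommRing R]
    [CommRing S] [Algebra R S] {s : Set S} (hs : Algebra.adjoin R s = ⊤)
    (hD : ∀ x ∈ s, D R S x = 0) : Subsingleton Ω[S⁄R] := by
  suffices (⊤ : Submodule S Ω[S⁄R]) ≤ ⊥ from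
    (subsingleton_iff_forall_eq 0).mpr fun y ↦ this trivial
  rw [← span_range_derivation, Submodule.span_le]
  rintro _ ⟨x, rfl⟩
  exact (D R S).eqOn_adjoin (D2 := 0) hD (hs ▸ Algebra.mem_top)

theorem KaehlerDifferential.subsingleton_of_adjoin_range_perfectRing {R S : Type*} [CommRing R]
    [CommRing S] [Algebra R S] (k : Type*) [CommRing k] (p : ℕ) [CharP k p] [PerfectRing k p]
    [Algebra k S] (h : Algebra.adjoin R (Set.range (algebraMap k S)) = ⊤) :
    Subsingleton Ω[S⁄R] :=
  subsingleton_of_adjoin_eq_top h <| by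
    rintro _ ⟨c, rfl⟩
    exact (D R S).map_algebraMap_perfectRing k p c

theorem Algebra.adjoin_range_algebraMap_eq_top_of_mem {k L A : Type*} [CommRing k] [CommRing L]
    [CommRing A] [Algebra k A] [Algebra L A] {z : A} (hz : Algebra.adjoin k {z} = ⊤)
    (hzL : z ∈ Algebra.adjoin L (Set.range (algebraMap k A))) :
    Algebra.adjoin L (Set.range (algebraMap k A)) = ⊤ := by
  refine Algebra.eq_top_iff.mpr fun x ↦ ?_
  have hx : x ∈ (Algebra.adjoin k {z}).toSubring := hz ▸ Algebra.mem_top (R := k)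
  rw [Algebra.adjoin_eq_ring_closure] at hx
  exact (Subring.closure_le (t := (Algebra.adjoin L _).toSubring)).mpr
    (Set.union_subset Algebra.subset_adjoin (Set.singleton_subset_iff.mpr hzL)) hx

set_option synthInstance.maxHeartbeats 1000000 in
/-- Example 3.2: with `L = 𝔽_p(x)`, `k` the perfection of `L`,
`A = k[Z]/(Z²)` regarded as an `L`-algebra via `f ↦ f + f'·z` (where `D`
is `d/dx`, the unique `𝔽_p`-derivation of `L` with `D x = 1`), the ring `A`
is a non-reduced Noetherian local ring with `Ω_{A/L} = 0`. -/
theorem stmt14 (p : ℕ) [Fact p.Prime] [CharP (RatFunc (ZMod p)) p]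
    (D : Derivation (ZMod p) (RatFunc (ZMod p)) (RatFunc (ZMod p)))
    (hD : D RatFunc.X = 1)
    [alg : Algebra (RatFunc (ZMod p))
        (Polynomial (PerfectClosure (RatFunc (ZMod p)) p) ⧸
          Ideal.span {(Polynomial.X :
            Polynomial (PerfectClosure (RatFunc (ZMod p)) p)) ^ 2})]
    (halg : ∀ f : RatFunc (ZMod p),
      algebraMap (RatFunc (ZMod p))
          (Polynomial (PerfectClosure (RatFunc (ZMod p)) p) ⧸
            Ideal.span {(Polynomial.X :
              Polynomial (PerfectClosure (RatFunc (ZMod p)) p)) ^ 2}) f =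
        algebraMap (PerfectClosure (RatFunc (ZMod p)) p) _
            (PerfectClosure.of (RatFunc (ZMod p)) p f)
        + algebraMap (PerfectClosure (RatFunc (ZMod p)) p) _
            (PerfectClosure.of (RatFunc (ZMod p)) p (D f))
          * Ideal.Quotient.mk _ (Polynomial.X :
              Polynomial (PerfectClosure (RatFunc (ZMod p)) p))) :
    ¬ IsReduced (Polynomial (PerfectClosure (RatFunc (ZMod p)) p) ⧸
        Ideal.span {(Polynomial.X :
          Polynomial (PerfectClosure (RatFunc (ZMod p)) p)) ^ 2}) ∧
    IsNoetherianRing (Polynomial (PerfectClosure (RatFunc (ZMod p)) p) ⧸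
        Ideal.span {(Polynomial.X :
          Polynomial (PerfectClosure (RatFunc (ZMod p)) p)) ^ 2}) ∧
    IsLocalRing (Polynomial (PerfectClosure (RatFunc (ZMod p)) p) ⧸
        Ideal.span {(Polynomial.X :
          Polynomial (PerfectClosure (RatFunc (ZMod p)) p)) ^ 2}) ∧
    Subsingleton (KaehlerDifferential (RatFunc (ZMod p))
        (Polynomial (PerfectClosure (RatFunc (ZMod p)) p) ⧸
          Ideal.span {(Polynomial.X :
            Polynomial (PerfectClosure (RatFunc (ZMod p)) p)) ^ 2})) := by
  set L := RatFunc (ZMod p)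
  set k := PerfectClosure L p
  set A := k[X] ⧸ Ideal.span {(X : k[X]) ^ 2}
  set z : A := Ideal.Quotient.mk _ X
  have hz : z = algebraMap L A RatFunc.X - algebraMap k A (PerfectClosure.of L p RatFunc.X) := by
    rw [halg, hD, map_one, map_one, one_mul, add_sub_cancel_left]
  have hzL : z ∈ Algebra.adjoin L (Set.range (algebraMap k A)) := by
    rw [hz]
    exact sub_mem (Subalgebra.algebraMap_mem _ _) (Algebra.subset_adjoin ⟨_, rfl⟩)
  refine ⟨not_isReduced_quotient_span_X_pow one_lt_two, inferInstance,
    isLocalRing_quotient_span_X_pow two_ne_zero, ?_⟩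
  exact KaehlerDifferential.subsingleton_of_adjoin_range_perfectRing k p
    (Algebra.adjoin_range_algebraMap_eq_top_of_mem (adjoin_mk_X_eq_top _) hzL)
end

section
/- Let k be a perfect field of characteristic p > 0 and k ⊆ K a field extension. For x ∈ K, one has dx = 0 in Ω_{K/k} if and only if x has a p-th root in K. -/
/-!
If `x = y ^ p` then `dx = p y^(p-1) dy = 0`. Conversely, let `x` not be a `p`-th power. Since `k`
is perfect, `k ⊆ K^p`, and Zorn's lemma gives an intermediate field `M ⊇ K^p` maximal among those
not containing `x`. Every `z ∉ M` has minimal polynomial `X^p - z^p` over `M`, so `[M(z) : M] = p`;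
maximality puts `x` in `M(z)`, hence `M(x) = M(z)`, and so `K = M(x) ≅ M[X]/(X^p - x^p)`. As
`X^p - x^p` has zero derivative, `d/dX` descends to a `k`-derivation of `K` sending `x` to `1`,
which factors through `Ω_{K/k}`; thus `dx ≠ 0`.
-/

open Polynomial IntermediateField

theorem CompleteLattice.IsCompactElement.exists_le_maximal_not_le {α : Type*} [CompleteLattice α]
    {k a : α} (hk : IsCompactElement k) (ha : ¬k ≤ a) :
    ∃ m, a ≤ m ∧ Maximal (fun b ↦ ¬k ≤ b) m :=
  zorn_le_nonempty₀ {b | ¬k ≤ b} (fun c hc hchain y hy ↦ ⟨sSup c, fun hkc ↦ by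
    obtain ⟨b, hb, hkb⟩ := (isCompactElement_iff_le_of_directed_sSup_le α k).1 hk c ⟨y, hy⟩
      hchain.directedOn hkc
    exact hc hb hkb, fun _ ↦ le_sSup⟩) a ha

theorem exists_derivation_apply_eq_one_of_derivative_minpoly_eq_zero {M L : Type*} [Field M]
    [Field L] [Algebra M L] {x : L} (htop : Algebra.adjoin M {x} = ⊤)
    (hder : derivative (minpoly M x) = 0) : ∃ d : Derivation M L L, d x = 1 := by
  have hsurj : Function.Surjective (aeval x : M[X] →ₐ[M] L) := fun z ↦ by
    have hz : z ∈ Algebra.adjoin M {x} := htop ▸ Algebra.mem_top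
    rwa [Algebra.adjoin_singleton_eq_range_aeval] at hz
  have hker : ∀ g : M[X], aeval x g = 0 → aeval x (derivative g) = 0 := by
    rintro _ hg
    obtain ⟨h, rfl⟩ := minpoly.dvd M x hg
    simp [derivative_mul, hder]
  refine ⟨Derivation.liftOfSurjective hsurj (d := derivative') hker, ?_⟩
  simpa using Derivation.liftOfSurjective_apply hsurj (d := derivative') hker X

section CharP

variable {p : ℕ} [hp : Fact p.Prime] {F K : Type*} [Field F] [Field K] [Algebra F K] [CharP K p]

theorem minpoly_eq_X_pow_sub_C_of_notMem_range {z : K} {c : F} (hc : algebraMap F K c = z ^ p)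
    (hz : z ∉ Set.range (algebraMap F K)) : minpoly F z = X ^ p - C c := by
  have hirr : Irreducible (X ^ p - C c) := X_pow_sub_C_irreducible_of_prime hp.out fun b hb ↦
    hz ⟨b, frobenius_inj K p (by simp [frobenius_def, ← map_pow, hb, hc])⟩
  exact (minpoly.eq_of_irreducible_of_monic hirr (by simp [hc])
    (monic_X_pow_sub_C c hp.out.ne_zero)).symm

theorem finrank_adjoin_simple_eq_char {z : K} {c : F} (hc : algebraMap F K c = z ^ p)
    (hz : z ∉ Set.range (algebraMap F K)) : Module.finrank F F⟮z⟯ = p := by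
  have hint : IsIntegral F z := (hc ▸ isIntegral_algebraMap).of_pow hp.out.pos
  rw [adjoin.finrank hint, minpoly_eq_X_pow_sub_C_of_notMem_range hc hz, natDegree_X_pow_sub_C]

theorem adjoin_simple_eq_top_of_maximal {M : IntermediateField F K} (hpow : ∀ z : K, z ^ p ∈ M)
    {x : K} (hmax : Maximal (fun N : IntermediateField F K ↦ x ∉ N) M) : M⟮x⟯ = ⊤ := by
  have hdeg : ∀ z ∉ M, Module.finrank M M⟮z⟯ = p := fun z hz ↦
    finrank_adjoin_simple_eq_char (c := ⟨z ^ p, hpow z⟩) rfl fun ⟨a, ha⟩ ↦ hz (ha ▸ a.2)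
  have hx_mem : ∀ z ∉ M, x ∈ M⟮z⟯ := fun z hz ↦ by
    by_contra hxz
    refine hz (hmax.2 (y := M⟮z⟯.restrictScalars F) hxz ?_ (mem_adjoin_simple_self M z))
    exact fun a ha ↦ M⟮z⟯.algebraMap_mem ⟨a, ha⟩
  refine eq_top_iff.2 fun z _ ↦ ?_
  by_cases hz : z ∈ M
  · exact M⟮x⟯.algebraMap_mem ⟨z, hz⟩
  have : FiniteDimensional M M⟮z⟯ :=
    .of_finrank_pos (by rw [hdeg z hz]; exact hp.out.pos)
  rw [eq_of_le_of_finrank_eq (adjoin_simple_le_iff.2 (hx_mem z hz)) (by rw [hdeg z hz, hdeg x hmax.1])]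
  exact mem_adjoin_simple_self M z

theorem exists_derivation_apply_eq_one_of_notMem {M₀ : IntermediateField F K}
    (hpow : ∀ z : K, z ^ p ∈ M₀) {x : K} (hx : x ∉ M₀) : ∃ d : Derivation F K K, d x = 1 := by
  obtain ⟨M, hM₀M, hmax⟩ := CompleteLattice.IsCompactElement.exists_le_maximal_not_le
    (adjoin_simple_isCompactElement (F := F) x) (adjoin_simple_le_iff.not.2 hx)
  simp only [adjoin_simple_le_iff] at hmax
  have hMpow : ∀ z : K, z ^ p ∈ M := fun z ↦ hM₀M (hpow z)
  have hint : IsIntegral M x :=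
    (isIntegral_algebraMap (x := (⟨x ^ p, hMpow x⟩ : M))).of_pow hp.out.pos
  have htop : Algebra.adjoin M {x} = ⊤ := by
    rw [← adjoin_simple_eq_top_iff_of_isAlgebraic hint.isAlgebraic]
    exact adjoin_simple_eq_top_of_maximal hMpow hmax
  have : CharP M p := (algebraMap M K).charP (algebraMap M K).injective p
  have hder : derivative (minpoly M x) = 0 := by
    rw [minpoly_eq_X_pow_sub_C_of_notMem_range (c := ⟨x ^ p, hMpow x⟩) rfl
      fun ⟨a, ha⟩ ↦ hmax.1 (ha ▸ a.2)]
    simp [derivative_X_pow]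
  obtain ⟨d, hd⟩ := exists_derivation_apply_eq_one_of_derivative_minpoly_eq_zero htop hder
  exact ⟨d.restrictScalars F, hd⟩

end CharP

/-- The lemma quoted in Corollary 3.3: over a perfect field `k` of
characteristic `p > 0`, an element `x` of a field extension `K` of `k`
satisfies `dx = 0` in `Ω_{K/k}` iff `x` has a `p`-th root in `K`. -/
theorem stmt15 (p : ℕ) [Fact p.Prime]
    (k : Type) [Field k] [CharP k p] [PerfectField k]
    (K : Type) [Field K] [Algebra k K] (x : K) :
    KaehlerDifferential.D k K x = 0 ↔ ∃ y : K, y ^ p = x := by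
  have : CharP K p := charP_of_injective_algebraMap (algebraMap k K).injective p
  refine ⟨fun hD ↦ ?_, ?_⟩
  · by_contra hroot
    let Kp : IntermediateField k K := (frobenius K p).fieldRange.toIntermediateField fun a ↦
      ⟨algebraMap k K ((frobeniusEquiv k p).symm a), by
        rw [frobenius_def, ← map_pow, frobeniusEquiv_symm_pow_p]⟩
    obtain ⟨d, hd⟩ := exists_derivation_apply_eq_one_of_notMem (M₀ := Kp) (fun z ↦ ⟨z, rfl⟩)
      fun ⟨y, hy⟩ ↦ hroot ⟨y, hy⟩
    have := d.liftKaehlerDifferential_comp_D x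
    rw [hD, map_zero, hd] at this
    exact zero_ne_one this
  · rintro ⟨y, rfl⟩
    rw [Derivation.leibniz_pow, ← Nat.cast_smul_eq_nsmul K, CharP.cast_eq_zero, zero_smul]
end

section
/- Let R = ⊕_{n∈ℕ} R_n be an ℕ-graded ring containing a field of characteristic zero. Then the kernel of the universal derivation d : R → Ω_{R/R_0} is exactly R_0. -/
/-!
The Euler derivation `E`, acting on a homogeneous element of degree `n` by multiplication
by `n`, is an `R₀`-derivation of `R`, so it factors through `d`: `E = φ ∘ d` for some
`φ : Ω_{R/R₀} → R`. Hence `d x = 0` forces `E x = 0`, i.e. `n • xₙ = 0` for every homogeneous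
component `xₙ` of `x`. Since `R` contains `ℚ`, this kills every component of positive degree.
-/

namespace GradedRing

variable {R σ : Type*} [CommRing R] [SetLike σ R] [AddSubgroupClass σ R] (𝒜 : ℕ → σ)
  [GradedRing 𝒜]

noncomputable def eulerHom : R →+ R :=
  (DirectSum.toAddMonoid fun n => n • AddSubmonoidClass.subtype (𝒜 n)).comp
    (DirectSum.decomposeAddEquiv 𝒜).toAddMonoidHom

variable {𝒜}

lemma eulerHom_of_mem {n : ℕ} {x : R} (hx : x ∈ 𝒜 n) : eulerHom 𝒜 x = n • x := by
  simp only [eulerHom, AddMonoidHom.comp_apply, AddEquiv.coe_toAddMonoidHom,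
    DirectSum.decomposeAddEquiv_apply, DirectSum.decompose_of_mem 𝒜 hx,
    DirectSum.toAddMonoid_of]
  rfl

variable (𝒜) in
lemma eulerHom_mul (x y : R) :
    eulerHom 𝒜 (x * y) = x * eulerHom 𝒜 y + eulerHom 𝒜 x * y := by
  induction x using DirectSum.Decomposition.inductionOn 𝒜 with
  | zero => simp
  | add x x' hx hx' => simp only [add_mul, map_add, hx, hx']; ring
  | homogeneous a =>
    induction y using DirectSum.Decomposition.inductionOn 𝒜 with
    | zero => simp
    | add y y' hy hy' => simp only [mul_add, map_add, hy, hy']; ring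
    | homogeneous b =>
      rw [eulerHom_of_mem (SetLike.mul_mem_graded a.2 b.2), eulerHom_of_mem a.2,
        eulerHom_of_mem b.2, add_smul, smul_mul_assoc, mul_smul_comm, add_comm]

variable (𝒜) in
noncomputable def eulerDerivation : Derivation (SetLike.GradeZero.subring 𝒜) R R :=
  Derivation.mk'
    { toFun := eulerHom 𝒜
      map_add' := map_add _
      map_smul' := fun r x => by
        simp only [Subring.smul_def, smul_eq_mul, eulerHom_mul, eulerHom_of_mem r.2,
          zero_smul, zero_mul, add_zero, RingHom.id_apply] }
    fun x y => by simp only [LinearMap.coe_mk, AddHom.coe_mk, smul_eq_mul, eulerHom_mul]; ring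

lemma eulerDerivation_apply (x : R) : eulerDerivation 𝒜 x = eulerHom 𝒜 x := rfl

lemma decompose_eulerHom (x : R) (n : ℕ) :
    (DirectSum.decompose 𝒜 (eulerHom 𝒜 x) n : R) = n • (DirectSum.decompose 𝒜 x n : R) := by
  induction x using DirectSum.Decomposition.inductionOn 𝒜 with
  | zero => simp
  | add x y hx hy => simp only [map_add, DirectSum.decompose_add, DirectSum.add_apply,
      AddMemClass.coe_add, hx, hy, smul_add]
  | @homogeneous m a =>
    rw [eulerHom_of_mem a.2]
    obtain rfl | hmn := eq_or_ne m n
    · rw [DirectSum.decompose_of_mem_same 𝒜 (nsmul_mem a.2 m),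
        DirectSum.decompose_of_mem_same 𝒜 a.2]
    · rw [DirectSum.decompose_of_mem_ne 𝒜 (nsmul_mem a.2 m) hmn,
        DirectSum.decompose_of_mem_ne 𝒜 a.2 hmn, smul_zero]

lemma mem_zero_of_eulerHom_eq_zero [IsAddTorsionFree R] {x : R} (hx : eulerHom 𝒜 x = 0) :
    x ∈ 𝒜 0 := by
  classical
  rw [← DirectSum.sum_support_decompose 𝒜 x]
  refine sum_mem fun n _ => ?_
  obtain rfl | hn := eq_or_ne n 0
  · exact SetLike.coe_mem _
  · have hnx : n • (DirectSum.decompose 𝒜 x n : R) = 0 := by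
      rw [← decompose_eulerHom, hx, DirectSum.decompose_zero, DirectSum.zero_apply,
        ZeroMemClass.coe_zero]
    rw [(nsmul_eq_zero_iff_right hn).mp hnx]
    exact zero_mem _

end GradedRing

lemma RingHom.isAddTorsionFree_of_charZero {k R : Type*} [Field k] [CharZero k] [CommRing R]
    (i : k →+* R) : IsAddTorsionFree R :=
  letI := i.toAlgebra
  .of_isTorsionFree k R

/-- Proposition 3.8(i): if `R` is an `ℕ`-graded ring containing a field of
characteristic zero, the kernel of the universal derivation
`d : R → Ω_{R/R₀}` is exactly `R₀`. -/
theorem stmt17 (R : Type) [CommRing R] (𝒜 : ℕ → AddSubgroup R) [GradedRing 𝒜]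
    (k : Type) [Field k] [CharZero k] (i : k →+* R) (x : R) :
    KaehlerDifferential.D (SetLike.GradeZero.subring 𝒜) R x = 0 ↔ x ∈ 𝒜 0 := by
  refine ⟨fun hx => ?_, fun hx => Derivation.map_algebraMap _ (⟨x, hx⟩ : 𝒜 0)⟩
  have := i.isAddTorsionFree_of_charZero
  apply GradedRing.mem_zero_of_eulerHom_eq_zero
  rw [← GradedRing.eulerDerivation_apply,
    ← (GradedRing.eulerDerivation 𝒜).liftKaehlerDifferential_comp_D, hx, map_zero]
end

section
/- Let R = ⊕_{n∈ℕ} R_n be an ℕ-graded ring containing a field of characteristic p > 0. Then the kernel of the universal derivation d : R → Ω_{R/R_0} is contained in the p-th Veronese subring ⊕_{j∈ℕ} R_{jp}. -/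
/-!
The Euler map `r ↦ ∑ n • rₙ` is an `R₀`-derivation of `R`, so it factors through the universal
derivation `d`. Hence `d x = 0` forces `n • xₙ = 0` for every `n`; when `p ∤ n` the integer `n` is
a unit of `k`, hence of `R`, and so `xₙ = 0`.
-/

open DirectSum

lemma Derivation.map_eq_zero_of_kaehlerD_eq_zero {A B M : Type*} [CommRing A] [CommRing B]
    [Algebra A B] [AddCommGroup M] [Module A M] [Module B M] [IsScalarTower A B M]
    (D : Derivation A B M) {x : B} (hx : KaehlerDifferential.D A B x = 0) : D x = 0 := by
  simpa using congrArg D.liftKaehlerDifferential hx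

section Euler

variable {R : Type*} [CommRing R] (𝒜 : ℕ → AddSubgroup R) [GradedRing 𝒜]

noncomputable def eulerHom : R →+ R :=
  (toAddMonoid fun n => n • (𝒜 n).subtype).comp (decomposeAddEquiv 𝒜).toAddMonoidHom

variable {𝒜}

lemma eulerHom_of_mem {n : ℕ} {a : R} (ha : a ∈ 𝒜 n) : eulerHom 𝒜 a = n • a := by
  lift a to 𝒜 n using ha
  simp [eulerHom, decomposeAddEquiv_apply, decompose_coe, toAddMonoid_of]

lemma eulerHom_mul (a b : R) : eulerHom 𝒜 (a * b) = a * eulerHom 𝒜 b + b * eulerHom 𝒜 a := by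
  induction a using Decomposition.inductionOn 𝒜 with
  | zero => simp
  | add a a' ha ha' => rw [add_mul, map_add, map_add, ha, ha']; ring
  | @homogeneous m a =>
    induction b using Decomposition.inductionOn 𝒜 with
    | zero => simp
    | add b b' hb hb' => rw [mul_add, map_add, map_add, hb, hb']; ring
    | @homogeneous n b =>
      rw [eulerHom_of_mem (SetLike.mul_mem_graded a.2 b.2), eulerHom_of_mem a.2,
        eulerHom_of_mem b.2]
      simp only [nsmul_eq_mul, Nat.cast_add]
      ring

lemma eulerHom_eq_zero_of_mem_zero {c : R} (hc : c ∈ 𝒜 0) : eulerHom 𝒜 c = 0 := by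
  rw [eulerHom_of_mem hc, zero_smul]

variable (𝒜)

noncomputable def eulerDerivation : Derivation (SetLike.GradeZero.subring 𝒜) R R where
  toFun := eulerHom 𝒜
  map_add' := map_add _
  map_smul' c r := by
    change eulerHom 𝒜 ((c : R) * r) = (c : R) * eulerHom 𝒜 r
    rw [eulerHom_mul, eulerHom_eq_zero_of_mem_zero c.2, mul_zero, add_zero]
  map_one_eq_zero' := eulerHom_eq_zero_of_mem_zero (SetLike.one_mem_graded 𝒜)
  leibniz' a b := by
    rw [smul_eq_mul, smul_eq_mul]
    exact eulerHom_mul a b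

variable {𝒜}

lemma decompose_eulerHom (r : R) (n : ℕ) :
    (decompose 𝒜 (eulerHom 𝒜 r) n : R) = n • (decompose 𝒜 r n : R) := by
  induction r using Decomposition.inductionOn 𝒜 with
  | zero => simp
  | add a a' ha ha' =>
    simp only [map_add, decompose_add, DirectSum.add_apply, AddSubgroup.coe_add, ha, ha', smul_add]
  | @homogeneous m a =>
    rw [eulerHom_of_mem a.2, decompose_of_mem _ (nsmul_mem a.2 m), decompose_coe]
    obtain rfl | h := eq_or_ne m n
    · simp
    · rw [of_eq_of_ne _ _ _ h.symm, of_eq_of_ne _ _ _ h.symm, ZeroMemClass.coe_zero, smul_zero]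

lemma nsmul_decompose_eq_zero_of_kaehlerD_eq_zero {x : R}
    (hx : KaehlerDifferential.D (SetLike.GradeZero.subring 𝒜) R x = 0) (n : ℕ) :
    n • (decompose 𝒜 x n : R) = 0 := by
  have hE : eulerHom 𝒜 x = 0 := (eulerDerivation 𝒜).map_eq_zero_of_kaehlerD_eq_zero hx
  rw [← decompose_eulerHom, hE, decompose_zero]
  rfl

end Euler

lemma eq_zero_of_nsmul_eq_zero_of_not_dvd {R k : Type*} [Ring R] [Field k] {p : ℕ} [CharP k p]
    (i : k →+* R) {n : ℕ} (hn : ¬ p ∣ n) {y : R} (hy : n • y = 0) : y = 0 := by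
  have hunit : IsUnit (n : R) := by
    simpa using (Ne.isUnit ((CharP.cast_eq_zero_iff k p n).not.mpr hn)).map i
  rwa [nsmul_eq_mul, hunit.mul_right_eq_zero] at hy

lemma mem_iSup_mul_of_decompose_eq_zero {R : Type*} [CommRing R] {𝒜 : ℕ → AddSubgroup R}
    [GradedRing 𝒜] {p : ℕ} {x : R} (hx : ∀ n, ¬ p ∣ n → (decompose 𝒜 x n : R) = 0) :
    x ∈ ⨆ j : ℕ, 𝒜 (j * p) := by
  classical
  rw [← sum_support_decompose 𝒜 x]
  refine AddSubgroup.sum_mem _ fun n _ => ?_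
  by_cases h : p ∣ n
  · obtain ⟨j, rfl⟩ := h
    exact AddSubgroup.mem_iSup_of_mem j (mul_comm p j ▸ (decompose 𝒜 x (p * j)).2)
  · rw [hx n h]
    exact zero_mem _

theorem stmt18_general (R : Type) [CommRing R] (𝒜 : ℕ → AddSubgroup R) [GradedRing 𝒜]
    (p : ℕ) (k : Type) [Field k] [CharP k p] (i : k →+* R) (x : R)
    (hx : KaehlerDifferential.D (SetLike.GradeZero.subring 𝒜) R x = 0) :
    x ∈ ⨆ j : ℕ, 𝒜 (j * p) :=
  mem_iSup_mul_of_decompose_eq_zero fun n hn =>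
    eq_zero_of_nsmul_eq_zero_of_not_dvd i hn (nsmul_decompose_eq_zero_of_kaehlerD_eq_zero hx n)

/-- Proposition 3.8(ii): if `R` is an `ℕ`-graded ring containing a field of
characteristic `p > 0`, the kernel of the universal derivation
`d : R → Ω_{R/R₀}` is contained in the `p`-th Veronese subring
`⊕_j R_{jp}`. -/
theorem stmt18 (R : Type) [CommRing R] (𝒜 : ℕ → AddSubgroup R) [GradedRing 𝒜]
    (p : ℕ) (hp : p.Prime) (k : Type) [Field k] [CharP k p] (i : k →+* R) (x : R)
    (hx : KaehlerDifferential.D (SetLike.GradeZero.subring 𝒜) R x = 0) :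
    x ∈ ⨆ j : ℕ, 𝒜 (j * p) :=
  stmt18_general R 𝒜 p k i x hx
end
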